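/- arXiv:1412.1505 — 13 statements merged into one kernel-verified Lean document; each statement's English description precedes it below -/
import Mathlib

section
/- Let w and w̄ be real numbers and n a natural number. Then the sum, over all R : Fin n → Fin n → Bool satisfying ∀ x, ∃ y, R x y = true, of w^{|R|} · w̄^{n² − |R|} equals ((w + w̄)^n − w̄^n)^n, where |R| denotes the number of pairs (x,y) with R x y = true. -/
open Finset

private def cnt (n : ℕ) (r : Fin n → Bool) : ℕ := (univ.filter (fun y => r y = true)).card

private lemma cnt_le (n : ℕ) (r : Fin n → Bool) : cnt n r ≤ n := by
  simpa [cnt] using (card_filter_le univ (fun y => r y = true))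

private lemma prodA (n : ℕ) (w wbar : ℝ) (r : Fin n → Bool) :
    ∏ i, (if r i = true then w else wbar) = w ^ cnt n r * wbar ^ (n - cnt n r) := by
  rw [Finset.prod_ite, Finset.prod_const, Finset.prod_const]
  congr 1
  rw [Finset.filter_not, Finset.card_sdiff_of_subset (filter_subset _ _)]
  simp [cnt]

private lemma sumg (n : ℕ) (w wbar : ℝ) :
    ∑ r : Fin n → Bool, (if ∃ y, r y = true then w ^ cnt n r * wbar ^ (n - cnt n r) else 0)
      = (w + wbar) ^ n - wbar ^ n := by
  have h1 : ∑ r : Fin n → Bool, w ^ cnt n r * wbar ^ (n - cnt n r) = (w + wbar) ^ n := by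
    have := Fintype.sum_pow (fun b : Bool => if b = true then w else wbar) n
    simp only [prodA] at this
    rw [← this]; simp
  have h2 : ∀ r : Fin n → Bool, ¬(∃ y, r y = true) ↔ r = fun _ => false := by
    intro r
    constructor
    · intro h; funext y; simpa using fun hy => h ⟨y, hy⟩
    · rintro rfl; simp
  calc ∑ r : Fin n → Bool, (if ∃ y, r y = true then w ^ cnt n r * wbar ^ (n - cnt n r) else 0)
      = ∑ r : Fin n → Bool, (w ^ cnt n r * wbar ^ (n - cnt n r)
          - if r = (fun _ => false) then w ^ cnt n r * wbar ^ (n - cnt n r) else 0) := by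
        apply Finset.sum_congr rfl
        intro r _
        by_cases h : ∃ y, r y = true
        · rw [if_pos h, if_neg, sub_zero]
          intro hr; exact ((h2 r).2 hr) h
        · rw [if_neg h, if_pos ((h2 r).1 h)]; ring
    _ = (w + wbar) ^ n - wbar ^ n := by
        rw [Finset.sum_sub_distrib, h1, Finset.sum_ite_eq' univ (fun _ => false)]
        simp [cnt]

/-- WFOMC(∀x∃y R(x,y), n, w, w̄) = ((w + w̄)^n - w̄^n)^n. -/
theorem wfomc_forall_exists (n : ℕ) (w wbar : ℝ) :
    ∑ R : Fin n → Fin n → Bool,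
      (if ∀ x, ∃ y, R x y = true then
        w ^ (Finset.univ.filter (fun p : Fin n × Fin n => R p.1 p.2 = true)).card *
        wbar ^ (n ^ 2 - (Finset.univ.filter (fun p : Fin n × Fin n => R p.1 p.2 = true)).card)
      else 0) =
      ((w + wbar) ^ n - wbar ^ n) ^ n := by
  have hcard : ∀ R : Fin n → Fin n → Bool,
      (Finset.univ.filter (fun p : Fin n × Fin n => R p.1 p.2 = true)).card
        = ∑ x, cnt n (R x) := by
    intro R
    rw [Finset.card_filter, Fintype.sum_prod_type]
    apply Finset.sum_congr rfl
    intro x _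
    rw [cnt, Finset.card_filter]
  have key : ∀ R : Fin n → Fin n → Bool,
      (if ∀ x, ∃ y, R x y = true then
        w ^ (Finset.univ.filter (fun p : Fin n × Fin n => R p.1 p.2 = true)).card *
        wbar ^ (n ^ 2 - (Finset.univ.filter (fun p : Fin n × Fin n => R p.1 p.2 = true)).card)
      else 0)
      = ∏ x, (if ∃ y, R x y = true then w ^ cnt n (R x) * wbar ^ (n - cnt n (R x)) else 0) := by
    intro R
    by_cases h : ∀ x, ∃ y, R x y = true
    · rw [if_pos h, hcard]
      have hsub : n ^ 2 - ∑ x, cnt n (R x) = ∑ x, (n - cnt n (R x)) := by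
        have : ∑ x, (n - cnt n (R x)) + ∑ x, cnt n (R x) = n ^ 2 := by
          rw [← Finset.sum_add_distrib]
          have : ∀ x : Fin n, (n - cnt n (R x)) + cnt n (R x) = n := fun x =>
            Nat.sub_add_cancel (cnt_le n (R x))
          simp [this, sq]
        omega
      rw [hsub, Finset.prod_congr rfl (fun x _ => if_pos (h x)),
        Finset.prod_mul_distrib, Finset.prod_pow_eq_pow_sum, Finset.prod_pow_eq_pow_sum]
    · rw [if_neg h]
      push_neg at h
      obtain ⟨x, hx⟩ := h
      refine (Finset.prod_eq_zero (Finset.mem_univ x) ?_).symm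
      rw [if_neg]
      simpa using hx
  rw [Finset.sum_congr rfl (fun R _ => key R),
    ← Fintype.sum_pow (fun r : Fin n → Bool => if ∃ y, r y = true then w ^ cnt n r * wbar ^ (n - cnt n r) else 0) n,
    sumg]
end

section
/- Let w_R, w̄_R, w_S, w̄_S, w_T, w̄_T be real numbers and n a natural number. Then the sum, over all triples (R : Fin n → Bool, S : Fin n → Fin n → Bool, T : Fin n → Bool) satisfying ∀ x y, R x = true ∨ S x y = true ∨ T y = true, of w_R^{|R|} · w̄_R^{n−|R|} · w_S^{|S|} · w̄_S^{n²−|S|} · w_T^{|T|} · w̄_T^{n−|T|} equals ∑_{k=0}^{n} ∑_{m=0}^{n} (n choose k)(n choose m) · w_R^{n−k} · w̄_R^{k} · w_S^{k·m} · (w_S + w̄_S)^{n²−k·m} · w_T^{n−m} · w̄_T^{m}, where |R|, |S|, |T| denote the numbers of true tuples of R, S, T. -/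
section WFOMCAux
open Finset

lemma bern {α : Type*} [Fintype α] [DecidableEq α] (A : Finset α) (w wb : ℝ) :
    ∑ f : α → Bool, (if ∀ a ∈ A, f a = true then
      w ^ (univ.filter (fun a => f a = true)).card *
      wb ^ (Fintype.card α - (univ.filter (fun a => f a = true)).card) else 0)
    = w ^ A.card * (w + wb) ^ (Fintype.card α - A.card) := by
  have key : ∀ f : α → Bool, (if ∀ a ∈ A, f a = true then
      w ^ (univ.filter (fun a => f a = true)).card *
      wb ^ (Fintype.card α - (univ.filter (fun a => f a = true)).card) else 0)
      = ∏ a, (if f a then w else if a ∈ A then 0 else wb) := by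
    intro f
    by_cases h : ∀ a ∈ A, f a = true
    · rw [if_pos h]
      rw [← Finset.prod_filter_mul_prod_filter_not univ (fun a => f a = true)]
      have h1 : ∀ a ∈ univ.filter (fun a => f a = true),
          (if f a then w else if a ∈ A then 0 else wb) = w := by
        intro a ha; simp at ha; simp [ha]
      have h2 : ∀ a ∈ univ.filter (fun a => ¬ (f a = true)),
          (if f a then w else if a ∈ A then 0 else wb) = wb := by
        intro a ha; simp at ha
        have : a ∉ A := fun hA => by simp [h a hA] at ha
        simp [ha, this]
      rw [Finset.prod_congr rfl h1, Finset.prod_congr rfl h2, Finset.prod_const,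
        Finset.prod_const]
      congr 2
      have := Finset.card_filter_add_card_filter_not (s := univ)
        (p := fun a => f a = true)
      simp only [Finset.card_univ] at this
      omega
    · rw [if_neg h]
      push_neg at h
      obtain ⟨a, ha, hfa⟩ := h
      exact (Finset.prod_eq_zero (Finset.mem_univ a) (by simp [hfa, ha])).symm
  simp only [key]
  rw [← Fintype.piFinset_univ, ← Finset.prod_univ_sum
    (t := fun _ : α => (univ : Finset Bool))
    (f := fun a b => if b then w else if a ∈ A then 0 else wb)]
  have : ∀ a : α, (∑ b : Bool, if b then w else if a ∈ A then 0 else wb)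
      = if a ∈ A then w else w + wb := by
    intro a; rw [Fintype.sum_bool]; by_cases hA : a ∈ A <;> simp [hA]
  rw [Finset.prod_congr rfl (fun a _ => this a),
    ← Finset.prod_filter_mul_prod_filter_not univ (fun a => a ∈ A)]
  have e1 : univ.filter (fun a => a ∈ A) = A := by simp
  have h1 : ∀ a ∈ A, (if a ∈ A then w else w + wb) = w := fun a ha => if_pos ha
  have h2 : ∀ a ∈ univ.filter (fun a => ¬ a ∈ A),
      (if a ∈ A then w else w + wb) = w + wb := by
    intro a ha; simp at ha; simp [ha]
  rw [e1, Finset.prod_congr rfl h1, Finset.prod_congr rfl h2, Finset.prod_const,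
    Finset.prod_const]
  congr 2
  have := Finset.card_filter_add_card_filter_not (s := univ) (p := fun a => a ∈ A)
  simp only [Finset.card_univ, e1] at this
  omega

lemma binom_group {α : Type*} [Fintype α] [DecidableEq α] (F : ℕ → ℝ) :
    ∑ f : α → Bool, F ((univ.filter (fun a => f a = false)).card)
    = ∑ k ∈ range (Fintype.card α + 1), ((Fintype.card α).choose k : ℝ) * F k := by
  have step1 : ∑ f : α → Bool, F ((univ.filter (fun a => f a = false)).card)
      = ∑ s : Finset α, F s.card := by
    apply Finset.sum_nbij' (fun f => univ.filter (fun a => f a = false))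
      (fun s => fun a => decide (a ∉ s))
    · intro f _; exact mem_univ _
    · intro s _; exact mem_univ _
    · intro f _
      funext a
      by_cases h : f a = false <;> simp [h]
    · intro s _
      ext a
      simp
    · intro f _
      rfl
  rw [step1]
  have step2 : (univ : Finset (Finset α)) = (univ : Finset α).powerset := by
    simp
  rw [step2, Finset.sum_powerset]
  simp only [card_univ]
  apply Finset.sum_congr rfl
  intro k hk
  have : ∀ s ∈ Finset.powersetCard k (univ : Finset α), F s.card = F k := by
    intro s hs
    rw [(Finset.mem_powersetCard.mp hs).2]
  rw [Finset.sum_congr rfl this, Finset.sum_const, Finset.card_powersetCard, card_univ,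
    nsmul_eq_mul]

lemma Ssum (n : ℕ) (R T : Fin n → Bool) (w wb : ℝ) :
    ∑ S : Fin n → Fin n → Bool,
      (if ∀ x y, R x = true ∨ S x y = true ∨ T y = true then
        w ^ (univ.filter (fun q : Fin n × Fin n => S q.1 q.2 = true)).card *
        wb ^ (n ^ 2 - (univ.filter (fun q : Fin n × Fin n => S q.1 q.2 = true)).card)
      else 0)
    = w ^ ((univ.filter (fun x => R x = false)).card *
          (univ.filter (fun y => T y = false)).card) *
      (w + wb) ^ (n ^ 2 - (univ.filter (fun x => R x = false)).card *
          (univ.filter (fun y => T y = false)).card) := by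
  set A := (univ.filter (fun x => R x = false)) ×ˢ (univ.filter (fun y => T y = false))
    with hA
  have hcardA : A.card = (univ.filter (fun x => R x = false)).card *
      (univ.filter (fun y => T y = false)).card := Finset.card_product _ _
  have hcard : Fintype.card (Fin n × Fin n) = n ^ 2 := by simp [sq]
  have hb := bern A w wb
  rw [hcard, hcardA] at hb
  rw [← hb]
  refine (Fintype.sum_equiv (Equiv.curry (Fin n) (Fin n) Bool) _ _ ?_).symm
  intro f
  have hcond : (∀ x y, R x = true ∨ Equiv.curry (Fin n) (Fin n) Bool f x y = true ∨
      T y = true) ↔ (∀ a ∈ A, f a = true) := by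
    constructor
    · intro h a haA
      rw [hA, Finset.mem_product] at haA
      simp only [mem_filter, mem_univ, true_and] at haA
      rcases h a.1 a.2 with h1 | h1 | h1
      · rw [haA.1] at h1; exact absurd h1 (by simp)
      · exact h1
      · rw [haA.2] at h1; exact absurd h1 (by simp)
    · intro h x y
      by_cases hR : R x = true
      · exact Or.inl hR
      by_cases hT : T y = true
      · exact Or.inr (Or.inr hT)
      refine Or.inr (Or.inl ?_)
      exact h (x, y) (by rw [hA, Finset.mem_product]; simp_all)
  have hfilt : (univ.filter (fun q : Fin n × Fin n =>
      Equiv.curry (Fin n) (Fin n) Bool f q.1 q.2 = true))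
      = univ.filter (fun a => f a = true) := by
    apply Finset.filter_congr
    intro q _
    simp [Equiv.curry]
  rw [hfilt]
  split_ifs with h1 h2 h2
  · rfl
  · exact absurd (hcond.mpr h1) h2
  · exact absurd (hcond.mp h2) h1
  · rfl

/-- WFOMC(∀x∀y (R(x) ∨ S(x,y) ∨ T(y)), n, w, w̄)
  = ∑_{k,m} C(n,k) C(n,m) w_R^{n−k} w̄_R^k w_S^{km} (w_S+w̄_S)^{n²−km} w_T^{n−m} w̄_T^m. -/
theorem wfomc_forall_RST (n : ℕ) (wR wbR wS wbS wT wbT : ℝ) :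
    ∑ R : Fin n → Bool, ∑ S : Fin n → Fin n → Bool, ∑ T : Fin n → Bool,
      (if ∀ x y, R x = true ∨ S x y = true ∨ T y = true then
        wR ^ (Finset.univ.filter (fun x => R x = true)).card *
        wbR ^ (n - (Finset.univ.filter (fun x => R x = true)).card) *
        wS ^ (Finset.univ.filter (fun q : Fin n × Fin n => S q.1 q.2 = true)).card *
        wbS ^ (n ^ 2 - (Finset.univ.filter (fun q : Fin n × Fin n => S q.1 q.2 = true)).card) *
        wT ^ (Finset.univ.filter (fun y => T y = true)).card *
        wbT ^ (n - (Finset.univ.filter (fun y => T y = true)).card)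
      else 0) =
      ∑ k ∈ Finset.range (n + 1), ∑ m ∈ Finset.range (n + 1),
        (n.choose k : ℝ) * (n.choose m : ℝ) *
          (wR ^ (n - k) * wbR ^ k * wS ^ (k * m) * (wS + wbS) ^ (n ^ 2 - k * m) *
            wT ^ (n - m) * wbT ^ m) := by
  have hsum : ∀ f : Fin n → Bool,
      (univ.filter (fun x => f x = true)).card + (univ.filter (fun x => f x = false)).card
        = n := by
    intro f
    have := Finset.card_filter_add_card_filter_not (s := univ)
      (p := fun x => f x = true)
    simpa [Bool.not_eq_true] using this
  set G : ℕ → ℕ → ℝ := fun k m =>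
    wR ^ (n - k) * wbR ^ k * wS ^ (k * m) * (wS + wbS) ^ (n ^ 2 - k * m) *
      wT ^ (n - m) * wbT ^ m with hG
  calc
    ∑ R : Fin n → Bool, ∑ S : Fin n → Fin n → Bool, ∑ T : Fin n → Bool,
      (if ∀ x y, R x = true ∨ S x y = true ∨ T y = true then
        wR ^ (Finset.univ.filter (fun x => R x = true)).card *
        wbR ^ (n - (Finset.univ.filter (fun x => R x = true)).card) *
        wS ^ (Finset.univ.filter (fun q : Fin n × Fin n => S q.1 q.2 = true)).card *
        wbS ^ (n ^ 2 - (Finset.univ.filter (fun q : Fin n × Fin n => S q.1 q.2 = true)).card) *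
        wT ^ (Finset.univ.filter (fun y => T y = true)).card *
        wbT ^ (n - (Finset.univ.filter (fun y => T y = true)).card)
      else 0)
      = ∑ R : Fin n → Bool, ∑ T : Fin n → Bool,
          G ((univ.filter (fun x => R x = false)).card)
            ((univ.filter (fun y => T y = false)).card) := by
        refine Finset.sum_congr rfl fun R _ => ?_
        rw [Finset.sum_comm]
        refine Finset.sum_congr rfl fun T _ => ?_
        set k := (univ.filter (fun x => R x = false)).card with hk
        set m := (univ.filter (fun y => T y = false)).card with hm
        have hkR : (univ.filter (fun x => R x = true)).card = n - k := by
          have := hsum R; omega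
        have hmT : (univ.filter (fun y => T y = true)).card = n - m := by
          have := hsum T; omega
        have hk2 : n - (n - k) = k := by have := hsum R; omega
        have hm2 : n - (n - m) = m := by have := hsum T; omega
        have factored : ∀ S : Fin n → Fin n → Bool,
            (if ∀ x y, R x = true ∨ S x y = true ∨ T y = true then
              wR ^ (n - k) * wbR ^ (n - (n - k)) *
              wS ^ (univ.filter (fun q : Fin n × Fin n => S q.1 q.2 = true)).card *
              wbS ^ (n ^ 2 - (univ.filter (fun q : Fin n × Fin n => S q.1 q.2 = true)).card) *
              wT ^ (n - m) * wbT ^ (n - (n - m))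
            else 0)
            = (wR ^ (n - k) * wbR ^ k * wT ^ (n - m) * wbT ^ m) *
              (if ∀ x y, R x = true ∨ S x y = true ∨ T y = true then
                wS ^ (univ.filter (fun q : Fin n × Fin n => S q.1 q.2 = true)).card *
                wbS ^ (n ^ 2 - (univ.filter (fun q : Fin n × Fin n => S q.1 q.2 = true)).card)
              else 0) := by
          intro S
          rw [hk2, hm2]
          split <;> ring
        simp only [hkR, hmT]
        rw [Finset.sum_congr rfl fun S _ => factored S, ← Finset.mul_sum,
          Ssum n R T wS wbS, hG]
        ring
    _ = ∑ R : Fin n → Bool, ∑ m ∈ range (n + 1), (n.choose m : ℝ) *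
          G ((univ.filter (fun x => R x = false)).card) m := by
        refine Finset.sum_congr rfl fun R _ => ?_
        have := binom_group (α := Fin n)
          (F := fun m => G ((univ.filter (fun x => R x = false)).card) m)
        simpa using this
    _ = ∑ m ∈ range (n + 1), (n.choose m : ℝ) *
          ∑ k ∈ range (n + 1), (n.choose k : ℝ) * G k m := by
        rw [Finset.sum_comm]
        refine Finset.sum_congr rfl fun m _ => ?_
        rw [← Finset.mul_sum]
        congr 1
        have := binom_group (α := Fin n) (F := fun k => G k m)
        simpa using this
    _ = ∑ k ∈ Finset.range (n + 1), ∑ m ∈ Finset.range (n + 1),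
        (n.choose k : ℝ) * (n.choose m : ℝ) *
          (wR ^ (n - k) * wbR ^ k * wS ^ (k * m) * (wS + wbS) ^ (n ^ 2 - k * m) *
            wT ^ (n - m) * wbT ^ m) := by
        simp only [Finset.mul_sum]
        rw [Finset.sum_comm]
        refine Finset.sum_congr rfl fun k _ => Finset.sum_congr rfl fun m _ => ?_
        rw [hG]
        ring

end WFOMCAux
end

section
/- Let V and J be finite types, w, w̄ : V → ℝ, and G : J → (V → Bool) → Bool arbitrary Boolean functions. Then ∑_{θ : V → Bool} ∑_{η : J → Bool} [if ∀ j, (G j θ = true → η j = true) then 1 else 0] · W(θ) · ∏_{j ∈ J} (if η j then 1 else −1) = ∑_{θ : V → Bool with G j θ = true for all j} W(θ), where W(θ) = ∏_{X with θ X = true} w X · ∏_{X with θ X = false} w̄ X. -/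
theorem key (J : Type*) [Fintype J] [DecidableEq J] (P : J → Prop) [DecidablePred P] :
    ∑ η : J → Bool, (if ∀ j, P j → η j = true then (1:ℝ) else 0) *
      ∏ j, (if η j = true then (1:ℝ) else -1)
    = if ∀ j, P j then 1 else 0 := by
  have h : ∀ η : J → Bool,
      (if ∀ j, P j → η j = true then (1:ℝ) else 0) * ∏ j, (if η j = true then (1:ℝ) else -1)
      = ∏ j, ((if P j → η j = true then (1:ℝ) else 0) * (if η j = true then 1 else -1)) := by
    intro η
    rw [Finset.prod_mul_distrib, Finset.prod_boole]
    simp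
  simp_rw [h]
  rw [← Fintype.piFinset_univ, ← Finset.prod_univ_sum (fun _ => (Finset.univ : Finset Bool)) (fun j b => (if P j → b = true then (1:ℝ) else 0) * (if b = true then 1 else -1))]
  rw [show (if ∀ j, P j then (1:ℝ) else 0) = ∏ j, (if P j then (1:ℝ) else 0) by rw [Finset.prod_boole]; simp]
  refine Finset.prod_congr rfl fun j _ => ?_
  by_cases hj : P j <;> simp [hj, Fintype.sum_bool]

/-- Weighted-model-counting core of the Skolemization lemma: adding, for each
constraint `G j`, a fresh variable `η j` with weights `w = 1, w̄ = −1` and the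
clause `G j → η j`, preserves the weighted model count of the conjunction of
the constraints `G j`. -/
theorem skolemization_wmc (V J : Type*) [Fintype V] [DecidableEq V]
    [Fintype J] [DecidableEq J] (w wbar : V → ℝ)
    (G : J → (V → Bool) → Bool) :
    ∑ θ : V → Bool, ∑ η : J → Bool,
      (if ∀ j, (G j θ = true → η j = true) then (1 : ℝ) else 0) *
        ((∏ X ∈ Finset.univ.filter (fun X => θ X = true), w X) *
         (∏ X ∈ Finset.univ.filter (fun X => θ X = false), wbar X)) *
        (∏ j, if η j = true then (1 : ℝ) else -1) =
    ∑ θ : V → Bool,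
      if ∀ j, G j θ = true then
        (∏ X ∈ Finset.univ.filter (fun X => θ X = true), w X) *
        (∏ X ∈ Finset.univ.filter (fun X => θ X = false), wbar X)
      else 0 := by
  refine Finset.sum_congr rfl fun θ _ => ?_
  set W := (∏ X ∈ Finset.univ.filter (fun X => θ X = true), w X) *
      (∏ X ∈ Finset.univ.filter (fun X => θ X = false), wbar X) with hW
  have : ∀ η : J → Bool,
      (if ∀ j, (G j θ = true → η j = true) then (1 : ℝ) else 0) * W *
        (∏ j, if η j = true then (1 : ℝ) else -1)
      = W * ((if ∀ j, (G j θ = true → η j = true) then (1 : ℝ) else 0) *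
        (∏ j, if η j = true then (1 : ℝ) else -1)) := fun η => by ring
  simp_rw [this]
  rw [← Finset.mul_sum, key J (fun j => G j θ = true)]
  by_cases h : ∀ j, G j θ = true <;> simp [h]
end

section
/- Let V and J be finite types, w, w̄ : V → ℝ, G : J → (V → Bool) → Bool arbitrary Boolean functions, and H : (V → Bool) → (J → Bool) → ℝ an arbitrary function. Then ∑_{θ : V → Bool} ∑_{α : J → Bool} ∑_{β : J → Bool} [if ∀ j, (G j θ ∨ α j) ∧ (α j ∨ β j) ∧ (G j θ ∨ β j) then 1 else 0] · W(θ) · (∏_{j ∈ J} if β j then 1 else −1) · H θ α = ∑_{θ : V → Bool} W(θ) · H θ (fun j => ¬ G j θ), where W(θ) = ∏_{X with θ X = true} w X · ∏_{X with θ X = false} w̄ X. -/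
/-- Weighted-model-counting core of the negation-elimination lemma: replacing
each negated subformula `¬ G j` by a fresh variable `α j`, together with a
fresh variable `β j` with weights `w(β) = 1, w̄(β) = −1` and the clauses
`(G j ∨ α j) ∧ (α j ∨ β j) ∧ (G j ∨ β j)`, preserves the weighted sum, where
`H` represents the rest of the formula's weighted dependence on the world and
on the fresh variables `α`. -/
theorem negation_elimination_wmc (V J : Type*) [Fintype V] [DecidableEq V]
    [Fintype J] [DecidableEq J] (w wbar : V → ℝ)
    (G : J → (V → Bool) → Bool) (H : (V → Bool) → (J → Bool) → ℝ) :
    ∑ θ : V → Bool, ∑ α : J → Bool, ∑ β : J → Bool,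
      (if ∀ j, (G j θ = true ∨ α j = true) ∧ (α j = true ∨ β j = true) ∧
          (G j θ = true ∨ β j = true) then (1 : ℝ) else 0) *
        ((∏ X ∈ Finset.univ.filter (fun X => θ X = true), w X) *
         (∏ X ∈ Finset.univ.filter (fun X => θ X = false), wbar X)) *
        (∏ j, if β j = true then (1 : ℝ) else -1) * H θ α =
    ∑ θ : V → Bool,
      ((∏ X ∈ Finset.univ.filter (fun X => θ X = true), w X) *
       (∏ X ∈ Finset.univ.filter (fun X => θ X = false), wbar X)) *
        H θ (fun j => !(G j θ)) := by
  refine Finset.sum_congr rfl fun θ _ => ?_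
  set W : ℝ := (∏ X ∈ Finset.univ.filter (fun X => θ X = true), w X) *
      (∏ X ∈ Finset.univ.filter (fun X => θ X = false), wbar X) with hW
  have key : ∀ α : J → Bool,
      ∑ β : J → Bool,
        (if ∀ j, (G j θ = true ∨ α j = true) ∧ (α j = true ∨ β j = true) ∧
            (G j θ = true ∨ β j = true) then (1 : ℝ) else 0) *
          (∏ j, if β j = true then (1 : ℝ) else -1) =
      if α = (fun j => !(G j θ)) then 1 else 0 := by
    intro α
    have h1 : ∀ β : J → Bool,
        (if ∀ j, (G j θ = true ∨ α j = true) ∧ (α j = true ∨ β j = true) ∧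
            (G j θ = true ∨ β j = true) then (1 : ℝ) else 0) *
          (∏ j, if β j = true then (1 : ℝ) else -1) =
        ∏ j, ((if (G j θ = true ∨ α j = true) ∧ (α j = true ∨ β j = true) ∧
            (G j θ = true ∨ β j = true) then (1 : ℝ) else 0) *
          (if β j = true then (1 : ℝ) else -1)) := by
      intro β
      rw [Finset.prod_mul_distrib, Finset.prod_boole]
      simp
    simp_rw [h1]
    rw [show (∑ β : J → Bool, ∏ j, ((if (G j θ = true ∨ α j = true) ∧ (α j = true ∨ β j = true) ∧
            (G j θ = true ∨ β j = true) then (1 : ℝ) else 0) *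
          (if β j = true then (1 : ℝ) else -1))) =
        ∏ j, ∑ b : Bool, ((if (G j θ = true ∨ α j = true) ∧ (α j = true ∨ b = true) ∧
            (G j θ = true ∨ b = true) then (1 : ℝ) else 0) *
          (if b = true then (1 : ℝ) else -1)) from
        (Fintype.prod_sum (fun (j : J) (b : Bool) =>
          (if (G j θ = true ∨ α j = true) ∧ (α j = true ∨ b = true) ∧
            (G j θ = true ∨ b = true) then (1 : ℝ) else 0) *
          (if b = true then (1 : ℝ) else -1))).symm]
    have h2 : ∀ j : J,
        (∑ b : Bool, (if (G j θ = true ∨ α j = true) ∧ (α j = true ∨ b = true) ∧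
            (G j θ = true ∨ b = true) then (1 : ℝ) else 0) *
          (if b = true then (1 : ℝ) else -1)) =
        if α j = !(G j θ) then 1 else 0 := by
      intro j
      cases hg : G j θ <;> cases ha : α j <;> simp [Fintype.sum_bool, hg, ha]
    simp_rw [h2]
    rw [Finset.prod_boole]
    congr 1
    simp [funext_iff, eq_iff_iff]
  calc ∑ α : J → Bool, ∑ β : J → Bool,
        (if ∀ j, (G j θ = true ∨ α j = true) ∧ (α j = true ∨ β j = true) ∧
            (G j θ = true ∨ β j = true) then (1 : ℝ) else 0) * W *
          (∏ j, if β j = true then (1 : ℝ) else -1) * H θ α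
      = ∑ α : J → Bool, (if α = (fun j => !(G j θ)) then (1:ℝ) else 0) * W * H θ α := by
        refine Finset.sum_congr rfl fun α _ => ?_
        have h3 : ∀ β : J → Bool,
            (if ∀ j, (G j θ = true ∨ α j = true) ∧ (α j = true ∨ β j = true) ∧
                (G j θ = true ∨ β j = true) then (1 : ℝ) else 0) * W *
              (∏ j, if β j = true then (1 : ℝ) else -1) * H θ α =
            ((if ∀ j, (G j θ = true ∨ α j = true) ∧ (α j = true ∨ β j = true) ∧
                (G j θ = true ∨ β j = true) then (1 : ℝ) else 0) *
              (∏ j, if β j = true then (1 : ℝ) else -1)) * (W * H θ α) := fun β => by ring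
        simp_rw [h3]
        rw [← Finset.sum_mul, key α]
        ring
    _ = W * H θ (fun j => !(G j θ)) := by
        simp [Finset.sum_ite_eq', ite_mul]
end

section
/- Let A and B be types and S : A → B → Prop. Suppose S has no alternating 4-cycle, i.e., there are no x₁ x₂ : A and y₁ y₂ : B with ¬S x₁ y₁, S x₂ y₁, ¬S x₂ y₂ and S x₁ y₂. Then for every k ≥ 2, S has no alternating 2k-cycle: there is no pair of sequences x : Fin k → A and y : Fin k → B such that ¬S (x i) (y i) for all i, S (x (i+1)) (y i) for all i < k−1, and S (x 0) (y (k−1)). -/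
/-- If the relation `S` has no alternating 4-cycle, then for every `k ≥ 2` it
has no alternating 2k-cycle. -/
theorem no_alternating_cycles {A B : Type*} (S : A → B → Prop)
    (h : ¬ ∃ (x₁ x₂ : A) (y₁ y₂ : B),
      ¬ S x₁ y₁ ∧ S x₂ y₁ ∧ ¬ S x₂ y₂ ∧ S x₁ y₂)
    (k : ℕ) (hk : 2 ≤ k) :
    ¬ ∃ (x : Fin k → A) (y : Fin k → B),
      (∀ i, ¬ S (x i) (y i)) ∧
      (∀ i : Fin k, (i : ℕ) < k - 1 → S (x (i + ⟨1, by omega⟩)) (y i)) ∧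
      S (x ⟨0, by omega⟩) (y ⟨k - 1, by omega⟩) := by
  push_neg at h
  rintro ⟨x, y, hdiag, hstep, hlast⟩
  -- resolution step: from S x₀ y₂ , ¬ S a y₂ , S a y₁ derive S x₀ y₁
  have res : ∀ (a : A) (y₁ y₂ : B), ¬ S a y₂ → S (x ⟨0, by omega⟩) y₂ → S a y₁ →
      S (x ⟨0, by omega⟩) y₁ := by
    intro a y₁ y₂ h1 h2 h3
    by_contra hc
    exact h a (x ⟨0, by omega⟩) y₂ y₁ h1 h2 hc h3
  -- downward induction: S (x 0) (y (k-1-j)) for all j < k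
  have main : ∀ j, j < k → S (x ⟨0, by omega⟩) (y ⟨k - 1 - j, by omega⟩) := by
    intro j
    induction j with
    | zero => intro _; simpa using hlast
    | succ n ih =>
      intro hn
      have hih := ih (by omega)
      -- step from index k-1-n to k-2-n = k-1-(n+1)
      have hlt : (k - 1 - (n + 1)) < k - 1 := by omega
      have hs := hstep ⟨k - 1 - (n + 1), by omega⟩ hlt
      have hadd : (⟨k - 1 - (n + 1), by omega⟩ + ⟨1, by omega⟩ : Fin k)
          = ⟨k - 1 - n, by omega⟩ := by
        apply Fin.ext
        simp [Fin.add_def, Nat.mod_eq_of_lt (by omega : k - 1 - (n + 1) + 1 < k)]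
        omega
      rw [hadd] at hs
      exact res (x ⟨k - 1 - n, by omega⟩) _ _ (hdiag _) hih hs
  have h0 := main (k - 1) (by omega)
  simp only [Nat.sub_self] at h0
  exact hdiag _ h0
end

section
/- Let n₁ ≥ 1 and n₂ be natural numbers and S : Fin n₁ → Fin n₂ → Prop. If for all x₁ x₂ : Fin n₁ and y₁ y₂ : Fin n₂ one has S x₁ y₁ ∨ ¬S x₂ y₁ ∨ S x₂ y₂ ∨ ¬S x₁ y₂, then either there exists x : Fin n₁ with S x y for all y : Fin n₂, or there exists y : Fin n₂ with ¬S x y for all x : Fin n₁. -/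
/-- Every model of Q_{S4} = ∀x₁∀x₂∀y₁∀y₂ (S(x₁,y₁) ∨ ¬S(x₂,y₁) ∨ S(x₂,y₂) ∨ ¬S(x₁,y₂))
over nonempty row domain satisfies P_a (a full row exists) or P_b (an empty
column exists). -/
theorem qs4_dichotomy (n₁ n₂ : ℕ) (h1 : 1 ≤ n₁) (S : Fin n₁ → Fin n₂ → Prop)
    (h : ∀ (x₁ x₂ : Fin n₁) (y₁ y₂ : Fin n₂),
      S x₁ y₁ ∨ ¬ S x₂ y₁ ∨ S x₂ y₂ ∨ ¬ S x₁ y₂) :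
    (∃ x, ∀ y, S x y) ∨ (∃ y, ∀ x, ¬ S x y) := by
  classical
  -- rows are totally ordered by inclusion
  have hchain : ∀ x₁ x₂ : Fin n₁, (∀ y, S x₂ y → S x₁ y) ∨ (∀ y, S x₁ y → S x₂ y) := by
    intro x₁ x₂
    by_contra hc
    push_neg at hc
    obtain ⟨⟨y₁, hy₁, hy₁'⟩, ⟨y₂, hy₂, hy₂'⟩⟩ := hc
    rcases h x₂ x₁ y₂ y₁ with h' | h' | h' | h' <;> tauto
  have hne : Nonempty (Fin n₁) := ⟨⟨0, h1⟩⟩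
  -- pick a row with maximal support cardinality
  let f : Fin n₁ → ℕ := fun x => (Finset.univ.filter (fun y => S x y)).card
  obtain ⟨x, hx⟩ := Finite.exists_max f
  by_cases hcol : ∃ y, ∀ x, ¬ S x y
  · exact Or.inr hcol
  · push_neg at hcol
    left
    refine ⟨x, fun y => ?_⟩
    obtain ⟨x', hx'⟩ := hcol y
    by_contra hxy
    rcases hchain x x' with hsub | hsub
    · exact hxy (hsub y hx')
    · have hss : (Finset.univ.filter (fun y => S x y)) ⊂
          (Finset.univ.filter (fun y => S x' y)) := by
        constructor
        · intro z hz
          simp only [Finset.mem_filter, Finset.mem_univ, true_and] at hz ⊢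
          exact hsub z hz
        · intro hcon
          have := hcon (by simp [hx'] : y ∈ Finset.univ.filter (fun y => S x' y))
          simp at this
          exact hxy this
      have := Finset.card_lt_card hss
      exact absurd (hx x') (by simp only [f]; omega)
end

section
/- Fix real numbers w, w̄. For natural numbers n₁, n₂ and S : Fin n₁ → Fin n₂ → Bool, let W(S) = w^{|S|} · w̄^{n₁·n₂ − |S|} where |S| is the number of true pairs, let Φ(S) be the condition ∀ x₁ x₂ : Fin n₁, ∀ y₁ y₂ : Fin n₂, S x₁ y₁ ∨ ¬S x₂ y₁ ∨ S x₂ y₂ ∨ ¬S x₁ y₂, let P_a(S) be ∃ x, ∀ y, S x y and P_b(S) be ∃ y, ∀ x, ¬S x y, and define f(n₁,n₂) = ∑_{S with Φ(S) ∧ P_a(S)} W(S) and g(n₁,n₂) = ∑_{S with Φ(S) ∧ P_b(S)} W(S). Then for all n₁ ≥ 1 and all n₂: ∑_{S with Φ(S)} W(S) = f(n₁,n₂) + g(n₁,n₂). -/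
/-- The number of true pairs of `S`. -/
def numTrue {n₁ n₂ : ℕ} (S : Fin n₁ → Fin n₂ → Bool) : ℕ :=
  (Finset.univ.filter (fun p : Fin n₁ × Fin n₂ => S p.1 p.2 = true)).card

/-- The symmetric weight of `S`: `w^{|S|} · w̄^{n₁·n₂ − |S|}`. -/
noncomputable def Wt (w wbar : ℝ) {n₁ n₂ : ℕ} (S : Fin n₁ → Fin n₂ → Bool) : ℝ :=
  w ^ numTrue S * wbar ^ (n₁ * n₂ - numTrue S)

/-- The query Q_{S4} = ∀x₁∀x₂∀y₁∀y₂ (S(x₁,y₁) ∨ ¬S(x₂,y₁) ∨ S(x₂,y₂) ∨ ¬S(x₁,y₂)). -/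
abbrev PhiS4 {n₁ n₂ : ℕ} (S : Fin n₁ → Fin n₂ → Bool) : Prop :=
  ∀ (x₁ x₂ : Fin n₁) (y₁ y₂ : Fin n₂),
    S x₁ y₁ = true ∨ ¬ S x₂ y₁ = true ∨ S x₂ y₂ = true ∨ ¬ S x₁ y₂ = true

/-- P_a : some row is full. -/
abbrev Pa {n₁ n₂ : ℕ} (S : Fin n₁ → Fin n₂ → Bool) : Prop :=
  ∃ x, ∀ y, S x y = true

/-- P_b : some column is empty. -/
abbrev Pb {n₁ n₂ : ℕ} (S : Fin n₁ → Fin n₂ → Bool) : Prop :=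
  ∃ y, ∀ x, ¬ S x y = true

/-- f(n₁,n₂) : the weighted count of models of Q_{S4} satisfying P_a. -/
noncomputable def fS4 (w wbar : ℝ) (n₁ n₂ : ℕ) : ℝ :=
  ∑ S : Fin n₁ → Fin n₂ → Bool,
    if PhiS4 S ∧ Pa S then Wt w wbar S else 0

/-- g(n₁,n₂) : the weighted count of models of Q_{S4} satisfying P_b. -/
noncomputable def gS4 (w wbar : ℝ) (n₁ n₂ : ℕ) : ℝ :=
  ∑ S : Fin n₁ → Fin n₂ → Bool,
    if PhiS4 S ∧ Pb S then Wt w wbar S else 0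

lemma pa_pb_not {n₁ n₂ : ℕ} (S : Fin n₁ → Fin n₂ → Bool) (ha : Pa S) (hb : Pb S) : False := by
  obtain ⟨x, hx⟩ := ha
  obtain ⟨y, hy⟩ := hb
  exact hy x (hx y)

lemma pa_or_pb {n₁ n₂ : ℕ} (S : Fin n₁ → Fin n₂ → Bool) (h1 : 1 ≤ n₁)
    (hΦ : PhiS4 S) : Pa S ∨ Pb S := by
  have hne : (Finset.univ : Finset (Fin n₁)).Nonempty := by
    simp [Finset.univ_nonempty_iff, Fin.pos_iff_nonempty.mp h1]
  obtain ⟨x₀, -, hx₀⟩ := Finset.exists_max_image Finset.univ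
    (fun x => (Finset.univ.filter (fun y => S x y = true)).card) hne
  by_cases hfull : ∀ y, S x₀ y = true
  · exact Or.inl ⟨x₀, hfull⟩
  · push_neg at hfull
    obtain ⟨y₂, hy₂⟩ := hfull
    refine Or.inr ⟨y₂, fun x₂ hx₂ => ?_⟩
    have hsub : (Finset.univ.filter (fun y => S x₀ y = true)) ⊂
        (Finset.univ.filter (fun y => S x₂ y = true)) := by
      constructor
      · intro y hy
        simp only [Finset.mem_filter, Finset.mem_univ, true_and] at hy ⊢
        rcases hΦ x₂ x₀ y y₂ with h | h | h | h
        · exact h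
        · exact absurd hy h
        · exact absurd h hy₂
        · exact absurd hx₂ h
      · intro hc
        have := hc (by simp [hx₂] : y₂ ∈ _)
        simp only [Finset.mem_filter, Finset.mem_univ, true_and] at this
        exact hy₂ this
    exact absurd (hx₀ x₂ (Finset.mem_univ _)) (not_le.mpr (Finset.card_lt_card hsub))

/-- WFOMC(Q_{S4}, n₁, n₂) = f(n₁,n₂) + g(n₁,n₂) for n₁ ≥ 1. -/
theorem wfomc_qs4_split (w wbar : ℝ) (n₁ n₂ : ℕ) (h1 : 1 ≤ n₁) :
    (∑ S : Fin n₁ → Fin n₂ → Bool, if PhiS4 S then Wt w wbar S else 0) =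
      fS4 w wbar n₁ n₂ + gS4 w wbar n₁ n₂ := by
  rw [fS4, gS4, ← Finset.sum_add_distrib]
  refine Finset.sum_congr rfl fun S _ => ?_
  by_cases hΦ : PhiS4 S
  · rcases pa_or_pb S h1 hΦ with h | h
    · rw [if_pos hΦ, if_pos ⟨hΦ, h⟩,
        if_neg (fun hc => pa_pb_not S h hc.2), add_zero]
    · rw [if_pos hΦ, if_neg (fun hc => pa_pb_not S hc.2 h),
        if_pos ⟨hΦ, h⟩, zero_add]
  · rw [if_neg hΦ, if_neg (fun hc => hΦ hc.1), if_neg (fun hc => hΦ hc.1), add_zero]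
end

section
/- Fix real numbers w, w̄. For natural numbers n₁, n₂ and S : Fin n₁ → Fin n₂ → Bool, let W(S) = w^{|S|} · w̄^{n₁·n₂ − |S|} where |S| is the number of true pairs, let Φ(S) be the condition ∀ x₁ x₂ : Fin n₁, ∀ y₁ y₂ : Fin n₂, S x₁ y₁ ∨ ¬S x₂ y₁ ∨ S x₂ y₂ ∨ ¬S x₁ y₂, let P_a(S) be ∃ x, ∀ y, S x y and P_b(S) be ∃ y, ∀ x, ¬S x y, and define f(n₁,n₂) = ∑_{S with Φ(S) ∧ P_a(S)} W(S) and g(n₁,n₂) = ∑_{S with Φ(S) ∧ P_b(S)} W(S). Then for all n₁ ≥ 1 and n₂ ≥ 1: f(n₁,n₂) = ∑_{k=1}^{n₁} (n₁ choose k) · w^{k·n₂} · g(n₁ − k, n₂). -/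
open Finset

private lemma numTrue_eq_sum {n₁ n₂ : ℕ} (S : Fin n₁ → Fin n₂ → Bool) :
    numTrue S = ∑ x, (univ.filter fun y => S x y = true).card := by
  classical
  simp only [numTrue, card_filter]
  rw [Fintype.sum_prod_type]

private lemma numTrue_le {n₁ n₂ : ℕ} (S : Fin n₁ → Fin n₂ → Bool) : numTrue S ≤ n₁ * n₂ := by
  classical
  calc numTrue S ≤ (Finset.univ : Finset (Fin n₁ × Fin n₂)).card := Finset.card_filter_le _ _
  _ = n₁ * n₂ := by simp

private lemma rowSet_chain {m n : ℕ} (T : Fin m → Fin n → Bool) (hΦ : PhiS4 T) (a b : Fin m) :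
    (univ.filter fun y => T b y = true) ⊆ (univ.filter fun y => T a y = true) ∨
    (univ.filter fun y => T a y = true) ⊆ (univ.filter fun y => T b y = true) := by
  classical
  by_cases h : (univ.filter fun y => T b y = true) ⊆ (univ.filter fun y => T a y = true)
  · exact Or.inl h
  · right
    obtain ⟨y₁, hy₁, hy₁'⟩ := Finset.not_subset.mp h
    simp only [mem_filter, mem_univ, true_and] at hy₁ hy₁'
    intro y₂ hy₂
    simp only [mem_filter, mem_univ, true_and] at hy₂ ⊢
    rcases hΦ a b y₁ y₂ with h' | h' | h' | h'
    · exact absurd h' hy₁'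
    · exact absurd hy₁ h'
    · exact h'
    · exact absurd hy₂ h'

private lemma pb_of_no_full {m n : ℕ} (T : Fin m → Fin n → Bool) (hΦ : PhiS4 T)
    (hnf : ∀ x, ∃ y, T x y = false) (hn : 1 ≤ n) : Pb T := by
  classical
  rcases Nat.eq_zero_or_pos m with hm | hm
  · exact ⟨⟨0, hn⟩, fun x => absurd x.isLt (by omega)⟩
  · have : Nonempty (Fin m) := ⟨⟨0, hm⟩⟩
    obtain ⟨a, -, ha⟩ := Finset.exists_max_image Finset.univ
      (fun x => (univ.filter fun y => T x y = true).card) Finset.univ_nonempty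
    have hsub : ∀ b, (univ.filter fun y => T b y = true) ⊆ (univ.filter fun y => T a y = true) := by
      intro b
      rcases rowSet_chain T hΦ a b with h | h
      · exact h
      · rw [Finset.eq_of_subset_of_card_le h (ha b (mem_univ b))]
    obtain ⟨y, hy⟩ := hnf a
    refine ⟨y, fun b hby => ?_⟩
    have : y ∈ (univ.filter fun y => T a y = true) :=
      hsub b (by simp [hby])
    simp only [mem_filter, mem_univ, true_and] at this
    rw [hy] at this
    exact Bool.false_ne_true this

private lemma fiber_sum (w wbar : ℝ) {n₁ : ℕ} (n₂ : ℕ) (h2 : 1 ≤ n₂) (X : Finset (Fin n₁))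
    (hX : X.Nonempty) :
    ∑ S ∈ univ.filter (fun S : Fin n₁ → Fin n₂ → Bool =>
        univ.filter (fun x => ∀ y, S x y = true) = X),
      (if PhiS4 S ∧ Pa S then Wt w wbar S else 0)
    = w ^ (X.card * n₂) * gS4 w wbar (n₁ - X.card) n₂ := by
  classical
  set k := X.card with hk
  have hkn : k ≤ n₁ := by
    have := Finset.card_le_card (Finset.subset_univ X)
    simpa [hk] using this
  have hscard : ((univ : Finset (Fin n₁)) \ X).card = n₁ - k := by
    rw [Finset.card_sdiff_of_subset (Finset.subset_univ X), Finset.card_univ, Fintype.card_fin]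
  let e : {x // x ∈ (univ : Finset (Fin n₁)) \ X} ≃ Fin (n₁ - k) :=
    Finset.equivFinOfCardEq hscard
  let res : (Fin n₁ → Fin n₂ → Bool) → (Fin (n₁ - k) → Fin n₂ → Bool) :=
    fun S a y => S (e.symm a : Fin n₁) y
  let ext : (Fin (n₁ - k) → Fin n₂ → Bool) → (Fin n₁ → Fin n₂ → Bool) :=
    fun T x y => if h : x ∈ X then true
      else T (e ⟨x, Finset.mem_sdiff.mpr ⟨Finset.mem_univ x, h⟩⟩) y
  have hnotX : ∀ a : Fin (n₁ - k), ((e.symm a : Fin n₁)) ∉ X := by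
    intro a
    exact (Finset.mem_sdiff.mp (e.symm a).2).2
  have hres_ext : ∀ T, res (ext T) = T := by
    intro T
    funext a y
    simp only [res, ext, dif_neg (hnotX a), Subtype.coe_eta, Equiv.apply_symm_apply]
  -- rewrite the RHS as a sum over the set B of structures with no full row
  have hg : gS4 w wbar (n₁ - k) n₂ =
      ∑ T ∈ univ.filter (fun T : Fin (n₁ - k) → Fin n₂ → Bool => ∀ a, ∃ y, T a y = false),
        (if PhiS4 T ∧ Pb T then Wt w wbar T else 0) := by
    rw [gS4]
    refine (Finset.sum_filter_of_ne ?_).symm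
    intro T _ hT
    have hcond : PhiS4 T ∧ Pb T := by
      by_contra h
      exact hT (if_neg h)
    obtain ⟨y, hy⟩ := hcond.2
    intro a
    refine ⟨y, ?_⟩
    have := hy a
    simpa using this
  rw [hg, Finset.mul_sum]
  refine Finset.sum_nbij' res ext ?_ ?_ ?_ ?_ ?_
  · -- res maps fiber to B
    intro S hS
    simp only [Finset.mem_filter, Finset.mem_univ, true_and] at hS ⊢
    intro a
    have hnot : ¬ ∀ y, S (e.symm a : Fin n₁) y = true := by
      intro hfull
      have hmem : (e.symm a : Fin n₁) ∈ Finset.univ.filter (fun x => ∀ y, S x y = true) :=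
        Finset.mem_filter.mpr ⟨Finset.mem_univ _, hfull⟩
      rw [hS] at hmem
      exact hnotX a hmem
    push_neg at hnot
    obtain ⟨y, hy⟩ := hnot
    exact ⟨y, by simpa [res] using hy⟩
  · -- ext maps B to fiber
    intro T hT
    simp only [Finset.mem_filter, Finset.mem_univ, true_and] at hT ⊢
    ext x
    simp only [Finset.mem_filter, Finset.mem_univ, true_and]
    constructor
    · intro hfull
      by_contra hx
      obtain ⟨y, hy⟩ := hT (e ⟨x, Finset.mem_sdiff.mpr ⟨Finset.mem_univ x, hx⟩⟩)
      have := hfull y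
      rw [show ext T x y = T (e ⟨x, Finset.mem_sdiff.mpr ⟨Finset.mem_univ x, hx⟩⟩) y from
        dif_neg hx, hy] at this
      exact Bool.false_ne_true this
    · intro hx y
      exact dif_pos hx
  · -- ext ∘ res = id on fiber
    intro S hS
    simp only [Finset.mem_filter, Finset.mem_univ, true_and] at hS
    funext x y
    by_cases hx : x ∈ X
    · have hx' : x ∈ Finset.univ.filter (fun x => ∀ y, S x y = true) := by rw [hS]; exact hx
      have : ∀ y, S x y = true := (Finset.mem_filter.mp hx').2
      simp only [ext, dif_pos hx, this y]
    · simp only [ext, res, dif_neg hx, Equiv.symm_apply_apply]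
  · -- res ∘ ext = id on B
    intro T _
    exact hres_ext T
  · -- summands agree
    intro S hS
    simp only [Finset.mem_filter, Finset.mem_univ, true_and] at hS
    have hfull : ∀ x ∈ X, ∀ y, S x y = true := by
      intro x hx
      rw [← hS] at hx
      exact (Finset.mem_filter.mp hx).2
    have hΦ_iff : PhiS4 S ↔ PhiS4 (res S) := by
      constructor
      · intro hΦ a₁ a₂ y₁ y₂
        exact hΦ _ _ y₁ y₂
      · intro hΦ x₁ x₂ y₁ y₂
        by_cases h1 : x₁ ∈ X
        · exact Or.inl (hfull x₁ h1 y₁)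
        · by_cases hx2 : x₂ ∈ X
          · exact Or.inr (Or.inr (Or.inl (hfull x₂ hx2 y₂)))
          · have := hΦ (e ⟨x₁, Finset.mem_sdiff.mpr ⟨Finset.mem_univ _, h1⟩⟩)
              (e ⟨x₂, Finset.mem_sdiff.mpr ⟨Finset.mem_univ _, hx2⟩⟩) y₁ y₂
            simpa [res, Equiv.symm_apply_apply] using this
    have hPa : Pa S := by
      obtain ⟨x, hx⟩ := hX
      exact ⟨x, hfull x hx⟩
    have hPb : PhiS4 (res S) → Pb (res S) := by
      intro hΦ
      refine pb_of_no_full (res S) hΦ ?_ h2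
      intro a
      have hnot : ¬ ∀ y, S (e.symm a : Fin n₁) y = true := by
        intro hfull'
        have hmem : (e.symm a : Fin n₁) ∈ Finset.univ.filter (fun x => ∀ y, S x y = true) :=
          Finset.mem_filter.mpr ⟨Finset.mem_univ _, hfull'⟩
        rw [hS] at hmem
        exact hnotX a hmem
      push_neg at hnot
      obtain ⟨y, hy⟩ := hnot
      exact ⟨y, by simpa [res] using hy⟩
    have hcond : (PhiS4 S ∧ Pa S) ↔ (PhiS4 (res S) ∧ Pb (res S)) := by
      constructor
      · rintro ⟨hΦ, -⟩
        exact ⟨hΦ_iff.mp hΦ, hPb (hΦ_iff.mp hΦ)⟩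
      · rintro ⟨hΦ, -⟩
        exact ⟨hΦ_iff.mpr hΦ, hPa⟩
    -- the weight identity
    have hnum : numTrue S = k * n₂ + numTrue (res S) := by
      rw [numTrue_eq_sum, numTrue_eq_sum]
      have hsplit := Finset.sum_sdiff (f := fun x => (univ.filter fun y => S x y = true).card)
        (Finset.subset_univ X)
      have hrow : ∀ x ∈ X, (univ.filter fun y => S x y = true).card = n₂ := by
        intro x hx
        have : (univ.filter fun y => S x y = true) = univ := by
          ext y
          simp [hfull x hx y]
        rw [this, Finset.card_univ, Fintype.card_fin]
      have hXsum : ∑ x ∈ X, (univ.filter fun y => S x y = true).card = k * n₂ := by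
        rw [Finset.sum_congr rfl hrow, Finset.sum_const, smul_eq_mul]
      have hCsum : ∑ x ∈ (univ : Finset (Fin n₁)) \ X, (univ.filter fun y => S x y = true).card
          = ∑ a, (univ.filter fun y => res S a y = true).card := by
        calc ∑ x ∈ (univ : Finset (Fin n₁)) \ X, (univ.filter fun y => S x y = true).card
            = ∑ x ∈ ((univ : Finset (Fin n₁)) \ X).attach,
              (univ.filter fun y => S (x : Fin n₁) y = true).card :=
              (Finset.sum_attach _ _).symm
          _ = ∑ x : {x // x ∈ (univ : Finset (Fin n₁)) \ X},
              (univ.filter fun y => S (x : Fin n₁) y = true).card := by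
              rw [Finset.univ_eq_attach]
          _ = ∑ a : Fin (n₁ - k),
              (univ.filter fun y => S ((e.symm a : _) : Fin n₁) y = true).card :=
              (Equiv.sum_comp e.symm
                (fun x : {x // x ∈ (univ : Finset (Fin n₁)) \ X} =>
                  (univ.filter fun y => S (x : Fin n₁) y = true).card)).symm
          _ = ∑ a, (univ.filter fun y => res S a y = true).card := rfl
      calc ∑ x, (univ.filter fun y => S x y = true).card
          = ∑ x ∈ (univ : Finset (Fin n₁)) \ X, (univ.filter fun y => S x y = true).card
            + ∑ x ∈ X, (univ.filter fun y => S x y = true).card := hsplit.symm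
        _ = k * n₂ + ∑ a, (univ.filter fun y => res S a y = true).card := by
            rw [hXsum, hCsum]; ring
    have hWt : Wt w wbar S = w ^ (k * n₂) * Wt w wbar (res S) := by
      have ht : numTrue (res S) ≤ (n₁ - k) * n₂ := numTrue_le _
      have harith : n₁ * n₂ - numTrue S = (n₁ - k) * n₂ - numTrue (res S) := by
        have h1 : n₁ * n₂ = k * n₂ + (n₁ - k) * n₂ := by
          rw [← Nat.add_mul, Nat.add_sub_cancel' hkn]
        omega
      rw [Wt, Wt, harith, hnum, pow_add]
      ring
    by_cases hc : PhiS4 S ∧ Pa S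
    · rw [if_pos hc, if_pos (hcond.mp hc), hWt]
    · rw [if_neg hc, if_neg (fun h => hc (hcond.mpr h)), mul_zero]

/-- Recurrence for f : f(n₁,n₂) = ∑_{k=1}^{n₁} C(n₁,k) · w^{k·n₂} · g(n₁−k, n₂). -/
theorem fS4_recurrence (w wbar : ℝ) (n₁ n₂ : ℕ) (h1 : 1 ≤ n₁) (h2 : 1 ≤ n₂) :
    fS4 w wbar n₁ n₂ =
      ∑ k ∈ Finset.Icc 1 n₁,
        (n₁.choose k : ℝ) * w ^ (k * n₂) * gS4 w wbar (n₁ - k) n₂ := by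
  classical
  have step1 : fS4 w wbar n₁ n₂ = ∑ X ∈ (Finset.univ : Finset (Fin n₁)).powerset,
      ∑ S ∈ Finset.univ.filter (fun S : Fin n₁ → Fin n₂ → Bool =>
          Finset.univ.filter (fun x => ∀ y, S x y = true) = X),
        (if PhiS4 S ∧ Pa S then Wt w wbar S else 0) := by
    rw [fS4]
    exact (Finset.sum_fiberwise_of_maps_to
      (fun S _ => Finset.mem_powerset.mpr (Finset.filter_subset _ _)) _).symm
  rw [step1]
  have step2 : ∀ X ∈ (Finset.univ : Finset (Fin n₁)).powerset,
      (∑ S ∈ Finset.univ.filter (fun S : Fin n₁ → Fin n₂ → Bool =>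
          Finset.univ.filter (fun x => ∀ y, S x y = true) = X),
        (if PhiS4 S ∧ Pa S then Wt w wbar S else 0))
      = if X = ∅ then 0 else w ^ (X.card * n₂) * gS4 w wbar (n₁ - X.card) n₂ := by
    intro X _
    by_cases hX : X = ∅
    · subst hX
      rw [if_pos rfl]
      apply Finset.sum_eq_zero
      intro S hS
      simp only [Finset.mem_filter, Finset.mem_univ, true_and] at hS
      rw [if_neg]
      rintro ⟨-, x, hx⟩
      have : x ∈ Finset.univ.filter (fun x => ∀ y, S x y = true) :=
        Finset.mem_filter.mpr ⟨Finset.mem_univ x, hx⟩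
      rw [hS] at this
      exact absurd this (Finset.notMem_empty x)
    · rw [if_neg hX]
      exact fiber_sum w wbar n₂ h2 X (Finset.nonempty_iff_ne_empty.mpr hX)
  rw [Finset.sum_congr rfl step2, Finset.sum_powerset]
  have hcard : (Finset.univ : Finset (Fin n₁)).card = n₁ := by simp
  rw [hcard]
  have step3 : ∀ j ∈ Finset.range (n₁ + 1),
      (∑ X ∈ Finset.powersetCard j (Finset.univ : Finset (Fin n₁)),
        if X = ∅ then 0 else w ^ (X.card * n₂) * gS4 w wbar (n₁ - X.card) n₂)
      = if j = 0 then 0 else (n₁.choose j : ℝ) * w ^ (j * n₂) * gS4 w wbar (n₁ - j) n₂ := by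
    intro j _
    by_cases hj0 : j = 0
    · subst hj0
      simp
    · rw [if_neg hj0]
      have hterm : ∀ X ∈ Finset.powersetCard j (Finset.univ : Finset (Fin n₁)),
          (if X = ∅ then 0 else w ^ (X.card * n₂) * gS4 w wbar (n₁ - X.card) n₂)
          = w ^ (j * n₂) * gS4 w wbar (n₁ - j) n₂ := by
        intro X hXmem
        have hXc : X.card = j := (Finset.mem_powersetCard.mp hXmem).2
        have hne : X ≠ ∅ := by
          intro h
          rw [h, Finset.card_empty] at hXc
          exact hj0 hXc.symm
        rw [if_neg hne, hXc]
      rw [Finset.sum_congr rfl hterm, Finset.sum_const, Finset.card_powersetCard, hcard,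
        nsmul_eq_mul]
      ring
  rw [Finset.sum_congr rfl step3]
  have hins : Finset.range (n₁ + 1) = insert 0 (Finset.Icc 1 n₁) := by
    ext j
    simp only [Finset.mem_range, Finset.mem_insert, Finset.mem_Icc]
    omega
  rw [hins, Finset.sum_insert (by simp)]
  rw [if_pos rfl, zero_add]
  refine Finset.sum_congr rfl (fun j hj => ?_)
  rw [if_neg]
  simp only [Finset.mem_Icc] at hj
  omega
end

section
/- For every natural number n, the number of triples (R : Fin n → Fin n → Bool, S : Fin n → Fin n → Fin n → Bool, T : Fin n → Fin n → Bool) such that there are no x, y, z with R x z = true, S x y z = true and T y z = true equals (∑_{k=0}^{n} ∑_{m=0}^{n} (n choose k)(n choose m) 2^{n² − k·m})^n. -/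
open Finset

lemma card_forced_false {α : Type*} [Fintype α] [DecidableEq α] (p : α → Prop)
    [DecidablePred p] :
    Fintype.card {f : α → Bool // ∀ a, p a → f a = false} =
      2 ^ (Fintype.card α - Fintype.card {a // p a}) := by
  have e : {f : α → Bool // ∀ a, p a → f a = false} ≃ ({a // ¬ p a} → Bool) :=
    { toFun := fun f a => f.1 a.1
      invFun := fun g => ⟨fun a => if h : p a then false else g ⟨a, h⟩,
        fun a ha => by simp [ha]⟩
      left_inv := fun f => by
        ext a
        by_cases h : p a
        · simp [h, f.2 a h]
        · simp [h]
      right_inv := fun g => by ext a; simp [a.2] }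
  rw [Fintype.card_congr e, Fintype.card_fun, Fintype.card_bool,
    Fintype.card_subtype_compl]

def finsetBoolEquiv (n : ℕ) : Finset (Fin n) ≃ (Fin n → Bool) where
  toFun := fun A x => decide (x ∈ A)
  invFun := fun r => Finset.univ.filter (fun x => r x = true)
  left_inv := fun A => by ext x; simp
  right_inv := fun r => by ext x; simp

lemma sum_bool_fun {n : ℕ} (g : ℕ → ℕ) :
    ∑ r : Fin n → Bool, g (Fintype.card {x // r x = true}) =
      ∑ k ∈ Finset.range (n + 1), n.choose k * g k := by
  have step1 : ∑ r : Fin n → Bool, g (Fintype.card {x // r x = true}) =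
      ∑ A : Finset (Fin n), g A.card := by
    refine (Fintype.sum_equiv (finsetBoolEquiv n) (fun A => g A.card)
      (fun r => g (Fintype.card {x // r x = true})) fun A => ?_).symm
    simp [finsetBoolEquiv, Fintype.card_subtype, Finset.filter_univ_mem]
  rw [step1]
  have huniv : (univ : Finset (Finset (Fin n))) = (univ : Finset (Fin n)).powerset := by
    rw [Finset.powerset_univ]
  rw [huniv, Finset.sum_powerset]
  simp only [Finset.card_univ, Fintype.card_fin]
  refine Finset.sum_congr rfl fun j _ => ?_
  rw [Finset.sum_congr rfl (fun A hA => by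
    rw [(Finset.mem_powersetCard.1 hA).2]), Finset.sum_const,
    Finset.card_powersetCard, Finset.card_univ, Fintype.card_fin, smul_eq_mul]

/-- The number of non-models of the γ-cyclic query
c_γ = ∃x∃y∃z (R(x,z) ∧ S(x,y,z) ∧ T(y,z)) factorizes over the separator
variable z: it equals (∑_{k,m} C(n,k) C(n,m) 2^{n²−km})^n. -/
theorem count_non_models_c_gamma (n : ℕ) :
    Fintype.card
      {t : (Fin n → Fin n → Bool) × (Fin n → Fin n → Fin n → Bool) ×
            (Fin n → Fin n → Bool) //
        ¬ ∃ x y z, t.1 x z = true ∧ t.2.1 x y z = true ∧ t.2.2 y z = true} =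
      (∑ k ∈ Finset.range (n + 1), ∑ m ∈ Finset.range (n + 1),
        n.choose k * n.choose m * 2 ^ (n ^ 2 - k * m)) ^ n := by
  classical
  let B := {p : (Fin n → Bool) × (Fin n → Fin n → Bool) × (Fin n → Bool) //
      ∀ x y, p.1 x = true → p.2.2 y = true → p.2.1 x y = false}
  have e1 : {t : (Fin n → Fin n → Bool) × (Fin n → Fin n → Fin n → Bool) ×
            (Fin n → Fin n → Bool) //
        ¬ ∃ x y z, t.1 x z = true ∧ t.2.1 x y z = true ∧ t.2.2 y z = true} ≃
      (Fin n → B) :=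
    { toFun := fun t z => ⟨(fun x => t.1.1 x z, fun x y => t.1.2.1 x y z,
        fun y => t.1.2.2 y z), by
          intro x y hx hy
          by_contra hs
          simp only [Bool.not_eq_false] at hs
          exact t.2 ⟨x, y, z, hx, hs, hy⟩⟩
      invFun := fun f => ⟨(fun x z => (f z).1.1 x, fun x y z => (f z).1.2.1 x y,
        fun y z => (f z).1.2.2 y), by
          rintro ⟨x, y, z, h1, h2, h3⟩
          have h1' : (f z).1.1 x = true := h1
          have h2' : (f z).1.2.1 x y = true := h2
          have h3' : (f z).1.2.2 y = true := h3
          rw [(f z).2 x y h1' h3'] at h2'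
          exact Bool.false_ne_true h2'⟩
      left_inv := fun t => rfl
      right_inv := fun f => rfl }
  rw [Fintype.card_congr e1, Fintype.card_fun, Fintype.card_fin]
  congr 1
  have e2 : B ≃ Σ rt : (Fin n → Bool) × (Fin n → Bool),
      {s : Fin n → Fin n → Bool // ∀ x y, rt.1 x = true → rt.2 y = true →
        s x y = false} :=
    { toFun := fun p => ⟨(p.1.1, p.1.2.2), ⟨p.1.2.1, p.2⟩⟩
      invFun := fun q => ⟨(q.1.1, q.2.1, q.1.2), q.2.2⟩
      left_inv := fun p => rfl
      right_inv := fun q => rfl }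
  rw [Fintype.card_congr e2, Fintype.card_sigma]
  have key : ∀ rt : (Fin n → Bool) × (Fin n → Bool),
      Fintype.card {s : Fin n → Fin n → Bool // ∀ x y, rt.1 x = true →
        rt.2 y = true → s x y = false} =
      2 ^ (n ^ 2 - Fintype.card {x // rt.1 x = true} *
        Fintype.card {y // rt.2 y = true}) := by
    intro rt
    have e3 : {s : Fin n → Fin n → Bool // ∀ x y, rt.1 x = true →
        rt.2 y = true → s x y = false} ≃
        {f : Fin n × Fin n → Bool //
          ∀ q, (rt.1 q.1 = true ∧ rt.2 q.2 = true) → f q = false} :=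
      { toFun := fun s => ⟨fun q => s.1 q.1 q.2, fun q hq => s.2 q.1 q.2 hq.1 hq.2⟩
        invFun := fun f => ⟨fun x y => f.1 (x, y), fun x y hx hy => f.2 (x, y) ⟨hx, hy⟩⟩
        left_inv := fun s => rfl
        right_inv := fun f => rfl }
    rw [Fintype.card_congr e3,
      card_forced_false (fun q : Fin n × Fin n => rt.1 q.1 = true ∧ rt.2 q.2 = true)]
    have hprod : Fintype.card {q : Fin n × Fin n // rt.1 q.1 = true ∧ rt.2 q.2 = true} =
        Fintype.card {x // rt.1 x = true} * Fintype.card {y // rt.2 y = true} := by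
      rw [Fintype.card_congr (Equiv.subtypeProdEquivProd (p := fun x => rt.1 x = true)
        (q := fun y => rt.2 y = true)), Fintype.card_prod]
    rw [hprod]
    congr 1
    simp [sq]
  rw [Finset.sum_congr rfl fun rt _ => key rt]
  rw [Fintype.sum_prod_type]
  rw [sum_bool_fun (fun k => ∑ t : Fin n → Bool,
    2 ^ (n ^ 2 - k * Fintype.card {y // t y = true}))]
  refine Finset.sum_congr rfl fun k _ => ?_
  rw [sum_bool_fun (fun m => 2 ^ (n ^ 2 - k * m)), Finset.mul_sum]
  exact Finset.sum_congr rfl fun m _ => by ring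
end

section
/- Let n and k be natural numbers and φ : (Fin k → Bool) → (Fin k → Bool) → Prop a decidable predicate. Then the number of tuples of binary relations R : Fin k → Fin n → Fin n → Bool such that for all a b : Fin n, φ (fun i => R i a b) (fun i => R i b a) holds, equals A^{n(n−1)/2} · B^n, where A is the number of pairs (u, v) of functions Fin k → Bool with φ u v ∧ φ v u, and B is the number of functions u : Fin k → Bool with φ u u. -/
/-!
Transposing, the `k` relations become one matrix `M : Fin n → Fin n → (Fin k → Bool)`, and
the constraint at `(a, b)` reads `φ (M a b) (M b a)`. For `a < b` the constraints at `(a, b)` and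
`(b, a)` involve only the two entries `M a b`, `M b a`, and the constraint at `(a, a)` only the
diagonal entry `M a a`. These blocks of entries partition the matrix, so the constrained
matrices are in bijection with independent choices, one per block: `A` choices for each of the
`n.choose 2` pairs `a < b`, and `B` for each of the `n` diagonal entries.
-/

section PairConstraint

variable {α β : Type*} [LinearOrder α] (φ : β → β → Prop)

def pairConstrainedEquiv :
    {M : α → α → β // ∀ a b, φ (M a b) (M b a)} ≃
      ({p : α × α // p.1 < p.2} → {uv : β × β // φ uv.1 uv.2 ∧ φ uv.2 uv.1}) ×
        (α → {u : β // φ u u}) where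
  toFun M :=
    (fun p => ⟨(M.1 p.1.1 p.1.2, M.1 p.1.2 p.1.1), M.2 _ _, M.2 _ _⟩,
      fun a => ⟨M.1 a a, M.2 a a⟩)
  invFun f :=
    ⟨fun a b =>
      if hab : a < b then (f.1 ⟨(a, b), hab⟩).1.1
      else if hba : b < a then (f.1 ⟨(b, a), hba⟩).1.2
      else (f.2 a).1, by
      intro a b
      rcases lt_trichotomy a b with h | rfl | h
      · simpa [h, h.not_gt] using (f.1 ⟨(a, b), h⟩).2.1
      · simpa using (f.2 a).2
      · simpa [h, h.not_gt] using (f.1 ⟨(b, a), h⟩).2.2⟩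
  left_inv M := by
    ext a b
    rcases lt_trichotomy a b with h | rfl | h
    · simp [h]
    · simp
    · simp [h, h.not_gt]
  right_inv f := by
    ext p
    · simp [p.2]
    · simp [p.2, p.2.not_gt]
    · simp

theorem card_pairConstrained [Fintype α] [Fintype β] [DecidableRel φ] :
    Fintype.card {M : α → α → β // ∀ a b, φ (M a b) (M b a)} =
      Fintype.card {uv : β × β // φ uv.1 uv.2 ∧ φ uv.2 uv.1} ^ (Fintype.card α).choose 2 *
        Fintype.card {u : β // φ u u} ^ Fintype.card α := by
  rw [Fintype.card_congr (pairConstrainedEquiv φ), Fintype.card_prod, Fintype.card_fun,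
    Fintype.card_fun, Fintype.card_subtype fun p : α × α => p.1 < p.2,
    Fintype.card_product_filter_lt]

end PairConstraint

/-- Core combinatorial identity behind PTIME data complexity of FO² (binary
relations only): the number of tuples of k binary relations on `Fin n`
satisfying a constraint `φ` on every ordered pair factorizes as
`A^{n(n−1)/2} · B^n`. -/
theorem fo2_binary_factorization (n k : ℕ)
    (φ : (Fin k → Bool) → (Fin k → Bool) → Prop)
    [∀ u v, Decidable (φ u v)] :
    Fintype.card
      {R : Fin k → Fin n → Fin n → Bool //
        ∀ a b : Fin n, φ (fun i => R i a b) (fun i => R i b a)} =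
      (Fintype.card
          {uv : (Fin k → Bool) × (Fin k → Bool) // φ uv.1 uv.2 ∧ φ uv.2 uv.1}) ^
        (n * (n - 1) / 2) *
      (Fintype.card {u : Fin k → Bool // φ u u}) ^ n := by
  let transpose :
      {R : Fin k → Fin n → Fin n → Bool //
          ∀ a b : Fin n, φ (fun i => R i a b) (fun i => R i b a)} ≃
        {M : Fin n → Fin n → Fin k → Bool // ∀ a b, φ (M a b) (M b a)} :=
    ((Equiv.piComm _).trans (Equiv.piCongrRight fun _ => Equiv.piComm _)).subtypeEquiv
      fun _ => Iff.rfl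
  rw [Fintype.card_congr transpose, ← Nat.choose_two_right]
  convert card_pairConstrained (α := Fin n) φ <;> exact (Fintype.card_fin n).symm
end

section
/- Let n, C, k be natural numbers and φ : Fin C → Fin C → (Fin k → Bool) → (Fin k → Bool) → Prop a decidable predicate. Then the number of pairs (c : Fin n → Fin C, R : Fin k → Fin n → Fin n → Bool) such that for all a b : Fin n, φ (c a) (c b) (fun i => R i a b) (fun i => R i b a) holds, equals the sum over all ν : Fin C → ℕ with ∑_ℓ ν ℓ = n of (n! / ∏_ℓ (ν ℓ)!) · ∏_{i < j} A_{ij}^{ν i · ν j} · ∏_ℓ B_ℓ^{ν ℓ (ν ℓ − 1)/2} · D_ℓ^{ν ℓ}, where A_{ij} is the number of pairs (u,v) of functions Fin k → Bool with φ i j u v ∧ φ j i v u, B_ℓ is the number of pairs (u,v) with φ ℓ ℓ u v ∧ φ ℓ ℓ v u, and D_ℓ is the number of u with φ ℓ ℓ u u. -/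
open Finset

namespace FO2Aux

def sigmaSubtypeFst {ι : Type*} {β : ι → Type*} (l : ι) :
    {s : Σ i, β i // s.1 = l} ≃ β l where
  toFun s := s.prop ▸ s.val.2
  invFun b := ⟨⟨l, b⟩, rfl⟩
  left_inv := by rintro ⟨⟨i, b⟩, rfl⟩; rfl
  right_inv b := rfl

def equivSigmaDecomp {n : ℕ} {ι : Type*} (β : ι → Type*) :
    (Fin n ≃ Σ l, β l) ≃ Σ c : Fin n → ι, ∀ l, {a // c a = l} ≃ β l where
  toFun f := ⟨fun a => (f a).1,
    fun l => (f.subtypeEquiv fun _ => Iff.rfl).trans (sigmaSubtypeFst l)⟩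
  invFun p := (Equiv.sigmaFiberEquiv p.1).symm.trans (Equiv.sigmaCongrRight p.2)
  left_inv f := Equiv.ext fun a => rfl
  right_inv := by
    rintro ⟨c, e⟩
    refine Sigma.ext rfl (heq_of_eq ?_)
    funext l
    ext x
    obtain ⟨a, rfl⟩ := x
    rfl

lemma card_colorings {n CC : ℕ} (ν : Fin CC → ℕ) (h : ∑ l, ν l = n) :
    (univ.filter fun c : Fin n → Fin CC =>
        ∀ l, (univ.filter fun a => c a = l).card = ν l).card
      * ∏ l, (ν l).factorial = n.factorial := by
  have hs : Fintype.card (Σ l, Fin (ν l)) = Fintype.card (Fin n) := by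
    simp [Fintype.card_sigma, h]
  have e0 : Fintype.card (Fin n ≃ Σ l, Fin (ν l)) = n.factorial := by
    rw [Fintype.card_equiv (Fintype.equivOfCardEq hs.symm), Fintype.card_fin]
  have e1 : Fintype.card (Fin n ≃ Σ l, Fin (ν l)) =
      ∑ c : Fin n → Fin CC, ∏ l, Fintype.card ({a // c a = l} ≃ Fin (ν l)) := by
    rw [Fintype.card_congr (equivSigmaDecomp fun l => Fin (ν l)), Fintype.card_sigma]
    exact Finset.sum_congr rfl fun c _ => Fintype.card_pi
  have key : ∀ c : Fin n → Fin CC,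
      (∏ l, Fintype.card ({a // c a = l} ≃ Fin (ν l))) =
        if (∀ l, (univ.filter fun a => c a = l).card = ν l)
          then ∏ l, (ν l).factorial else 0 := by
    intro c
    by_cases hc : ∀ l, (univ.filter fun a => c a = l).card = ν l
    · rw [if_pos hc]
      refine Finset.prod_congr rfl fun l _ => ?_
      have hcl : Fintype.card {a // c a = l} = ν l := by
        rw [Fintype.card_subtype]; exact hc l
      rw [Fintype.card_equiv (Fintype.equivOfCardEq (by simp [hcl])), hcl]
    · rw [if_neg hc]
      push_neg at hc
      obtain ⟨l, hl⟩ := hc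
      refine Finset.prod_eq_zero (mem_univ l) ?_
      have : IsEmpty ({a // c a = l} ≃ Fin (ν l)) := by
        refine ⟨fun e => hl ?_⟩
        have := Fintype.card_congr e
        simpa [Fintype.card_subtype] using this
      exact Fintype.card_eq_zero
  rw [← e0, e1]
  rw [Finset.sum_congr rfl fun c _ => key c]
  rw [← Finset.sum_filter, Finset.sum_const, smul_eq_mul]

lemma mul_self_sub_self (m : ℕ) : m * m - m = m * (m - 1) := by
  cases m with
  | zero => simp
  | succ t => rw [Nat.succ_sub_one, Nat.mul_succ, Nat.add_sub_cancel]

lemma even_mul_pred (m : ℕ) : Even (m * (m - 1)) := by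
  cases m with
  | zero => simp
  | succ t => rw [Nat.succ_sub_one, mul_comm]; exact Nat.even_mul_succ_self t

-- regroup diagonal
lemma regroup_D {n CM : ℕ} (c : Fin n → Fin CM) (D : Fin CM → ℕ) :
    (∏ a, D (c a)) = ∏ l, D l ^ (univ.filter fun a => c a = l).card := by
  rw [← Finset.prod_fiberwise univ c (fun a => D (c a))]
  refine Finset.prod_congr rfl fun l _ => ?_
  rw [Finset.prod_congr rfl (fun a ha => by rw [(mem_filter.1 ha).2] : ∀ a ∈ _, D (c a) = D l),
    Finset.prod_const]

-- regroup off-diagonal, squaring argument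
lemma regroup_A {n CM : ℕ} (c : Fin n → Fin CM) (A : Fin CM → Fin CM → ℕ)
    (hA : ∀ i j, A i j = A j i) :
    (∏ q ∈ univ.filter (fun q : Fin n × Fin n => q.1 < q.2), A (c q.1) (c q.2)) =
      (∏ p ∈ univ.filter (fun p : Fin CM × Fin CM => p.1 < p.2),
          A p.1 p.2 ^ ((univ.filter fun a => c a = p.1).card *
            (univ.filter fun a => c a = p.2).card)) *
        ∏ l, A l l ^ ((univ.filter fun a => c a = l).card *
            ((univ.filter fun a => c a = l).card - 1) / 2) := by
  set ν : Fin CM → ℕ := fun l => (univ.filter fun a => c a = l).card with hν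
  apply Nat.pow_left_injective (n := 2) (by norm_num)
  simp only []
  -- both sides squared equal the product over the offDiag
  have upper_eq : (∏ q ∈ univ.filter (fun q : Fin n × Fin n => q.2 < q.1), A (c q.1) (c q.2)) =
      ∏ q ∈ univ.filter (fun q : Fin n × Fin n => q.1 < q.2), A (c q.1) (c q.2) := by
    refine Finset.prod_nbij' Prod.swap Prod.swap ?_ ?_ ?_ ?_ ?_
    · intro q hq; simp at hq ⊢; exact hq
    · intro q hq; simp at hq ⊢; exact hq
    · intro q _; simp
    · intro q _; simp
    · intro q _; exact hA _ _
  have hsplit : univ.filter (fun q : Fin n × Fin n => q.1 ≠ q.2) =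
      univ.filter (fun q : Fin n × Fin n => q.1 < q.2) ∪
        univ.filter (fun q : Fin n × Fin n => q.2 < q.1) := by
    rw [← Finset.filter_or]
    exact Finset.filter_congr fun q _ => ne_iff_lt_or_gt
  have hdisj : Disjoint (univ.filter (fun q : Fin n × Fin n => q.1 < q.2))
      (univ.filter (fun q : Fin n × Fin n => q.2 < q.1)) := by
    rw [Finset.disjoint_left]
    intro q hq hq'
    simp at hq hq'
    exact absurd hq' (lt_asymm hq)
  have lhs_sq : (∏ q ∈ univ.filter (fun q : Fin n × Fin n => q.1 < q.2), A (c q.1) (c q.2)) ^ 2 =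
      ∏ q ∈ univ.filter (fun q : Fin n × Fin n => q.1 ≠ q.2), A (c q.1) (c q.2) := by
    rw [hsplit, Finset.prod_union hdisj, upper_eq, sq]
  rw [lhs_sq]
  -- group by color pair
  have hgroup : (∏ q ∈ univ.filter (fun q : Fin n × Fin n => q.1 ≠ q.2), A (c q.1) (c q.2)) =
      ∏ p : Fin CM × Fin CM, A p.1 p.2 ^
        ((univ.filter (fun q : Fin n × Fin n => q.1 ≠ q.2)).filter
          (fun q => (c q.1, c q.2) = p)).card := by
    rw [← Finset.prod_fiberwise_of_maps_to (t := (univ : Finset (Fin CM × Fin CM)))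
      (g := fun q : Fin n × Fin n => (c q.1, c q.2)) (fun q _ => mem_univ _)
      (fun q => A (c q.1) (c q.2))]
    refine Finset.prod_congr rfl fun p _ => ?_
    rw [Finset.prod_congr rfl (fun q hq => ?_), Finset.prod_const]
    have h2 := (mem_filter.1 hq).2
    rw [← h2]
  -- fiber counts
  have hfib_ne : ∀ p : Fin CM × Fin CM, p.1 ≠ p.2 →
      ((univ.filter (fun q : Fin n × Fin n => q.1 ≠ q.2)).filter
        (fun q => (c q.1, c q.2) = p)).card = ν p.1 * ν p.2 := by
    intro p hp
    rw [← Finset.card_product]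
    congr 1
    ext ⟨a, b⟩
    simp only [mem_filter, mem_product, mem_univ, true_and, Prod.ext_iff]
    constructor
    · rintro ⟨-, h1, h2⟩; exact ⟨h1, h2⟩
    · rintro ⟨h1, h2⟩
      exact ⟨fun hab => hp (by rw [← h1, ← h2, hab]), h1, h2⟩
  have hfib_diag : ∀ l : Fin CM,
      ((univ.filter (fun q : Fin n × Fin n => q.1 ≠ q.2)).filter
        (fun q => (c q.1, c q.2) = (l, l))).card = ν l * (ν l - 1) := by
    intro l
    have : ((univ.filter (fun q : Fin n × Fin n => q.1 ≠ q.2)).filter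
        (fun q => (c q.1, c q.2) = (l, l))) = (univ.filter fun a => c a = l).offDiag := by
      ext ⟨a, b⟩
      simp only [mem_filter, mem_offDiag, mem_univ, true_and, Prod.ext_iff]
      tauto
    rw [this, Finset.offDiag_card, mul_self_sub_self]
  -- split the color-pair product into lower, upper, diag
  have hsplitC : ∀ F : Fin CM × Fin CM → ℕ,
      (∏ p : Fin CM × Fin CM, F p) =
        ((∏ p ∈ univ.filter (fun p : Fin CM × Fin CM => p.1 < p.2), F p) *
          ∏ p ∈ univ.filter (fun p : Fin CM × Fin CM => p.2 < p.1), F p) *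
          ∏ l, F (l, l) := by
    intro F
    rw [← Finset.prod_filter_mul_prod_filter_not univ (fun p : Fin CM × Fin CM => p.1 ≠ p.2) F]
    congr 1
    · rw [show univ.filter (fun p : Fin CM × Fin CM => p.1 ≠ p.2) =
          univ.filter (fun p : Fin CM × Fin CM => p.1 < p.2) ∪
            univ.filter (fun p : Fin CM × Fin CM => p.2 < p.1) by
        rw [← Finset.filter_or]; exact Finset.filter_congr fun q _ => ne_iff_lt_or_gt]
      rw [Finset.prod_union (by
        rw [Finset.disjoint_left]
        intro p hp hp'
        simp at hp hp'
        exact absurd hp' (lt_asymm hp))]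
    · refine Finset.prod_nbij' (fun p => p.1) (fun l => (l, l)) ?_ ?_ ?_ ?_ ?_
      · intro p _; exact mem_univ _
      · intro l _; simp
      · intro p hp
        simp only [mem_filter, mem_univ, true_and, not_ne_iff] at hp
        exact Prod.ext rfl hp
      · intro l _; rfl
      · intro p hp
        simp only [mem_filter, mem_univ, true_and, not_ne_iff] at hp
        rw [show p = (p.1, p.1) from Prod.ext rfl hp.symm]
  rw [hgroup, hsplitC]
  -- rewrite each part
  have upperC : (∏ p ∈ univ.filter (fun p : Fin CM × Fin CM => p.2 < p.1), A p.1 p.2 ^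
        ((univ.filter (fun q : Fin n × Fin n => q.1 ≠ q.2)).filter
          (fun q => (c q.1, c q.2) = p)).card) =
      ∏ p ∈ univ.filter (fun p : Fin CM × Fin CM => p.1 < p.2), A p.1 p.2 ^ (ν p.1 * ν p.2) := by
    refine Finset.prod_nbij' Prod.swap Prod.swap ?_ ?_ ?_ ?_ ?_
    · intro p hp; simp at hp ⊢; exact hp
    · intro p hp; simp at hp ⊢; exact hp
    · intro p _; simp
    · intro p _; simp
    · intro p hp
      simp only [mem_filter, mem_univ, true_and] at hp
      rw [hfib_ne p (ne_of_gt hp), hA p.1 p.2]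
      rw [mul_comm (ν p.1)]
      rfl
  have lowerC : (∏ p ∈ univ.filter (fun p : Fin CM × Fin CM => p.1 < p.2), A p.1 p.2 ^
        ((univ.filter (fun q : Fin n × Fin n => q.1 ≠ q.2)).filter
          (fun q => (c q.1, c q.2) = p)).card) =
      ∏ p ∈ univ.filter (fun p : Fin CM × Fin CM => p.1 < p.2), A p.1 p.2 ^ (ν p.1 * ν p.2) := by
    refine Finset.prod_congr rfl fun p hp => ?_
    simp only [mem_filter, mem_univ, true_and] at hp
    rw [hfib_ne p (ne_of_lt hp)]
  have diagC : (∏ l, A l l ^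
        ((univ.filter (fun q : Fin n × Fin n => q.1 ≠ q.2)).filter
          (fun q => (c q.1, c q.2) = (l, l))).card) =
      ∏ l, A l l ^ (ν l * (ν l - 1)) := by
    refine Finset.prod_congr rfl fun l _ => ?_
    rw [hfib_diag l]
  rw [lowerC, upperC, diagC, mul_pow, pow_two]
  congr 1
  rw [← Finset.prod_pow]
  refine Finset.prod_congr rfl fun l _ => ?_
  rw [← pow_mul, Nat.div_mul_cancel (even_mul_pred (ν l)).two_dvd]

def pairSplit (n : ℕ) (V : Type*) :
    (Fin n × Fin n → V) ≃ ({q : Fin n × Fin n // q.1 < q.2} → V × V) × (Fin n → V) where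
  toFun S := (fun q => (S q.1, S q.1.swap), fun a => S (a, a))
  invFun P q :=
    if h : q.1 < q.2 then (P.1 ⟨q, h⟩).1
    else if h' : q.2 < q.1 then (P.1 ⟨q.swap, h'⟩).2
    else P.2 q.1
  left_inv S := by
    funext q
    obtain ⟨a, b⟩ := q
    rcases lt_trichotomy a b with h | h | h
    · simp [h]
    · subst h
      simp [lt_irrefl]
    · simp [h, lt_asymm h]
  right_inv P := by
    obtain ⟨L, Dg⟩ := P
    refine Prod.ext ?_ ?_
    · funext q
      obtain ⟨⟨a, b⟩, h⟩ := q
      simp [h, lt_asymm h]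
    · funext a
      simp [lt_irrefl]

variable {k C : ℕ} (φ : Fin C → Fin C → (Fin k → Bool) → (Fin k → Bool) → Prop)
  [∀ i j u v, Decidable (φ i j u v)]

def Acnt (i j : Fin C) : ℕ :=
  Fintype.card {uv : (Fin k → Bool) × (Fin k → Bool) // φ i j uv.1 uv.2 ∧ φ j i uv.2 uv.1}

def Dcnt (l : Fin C) : ℕ := Fintype.card {u : Fin k → Bool // φ l l u u}

lemma Acnt_symm (i j : Fin C) : Acnt φ i j = Acnt φ j i :=
  Fintype.card_congr <| (Equiv.prodComm _ _).subtypeEquiv fun _ => and_comm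

lemma count_R (n : ℕ) (c : Fin n → Fin C) :
    Fintype.card {R : Fin k → Fin n → Fin n → Bool //
        ∀ a b, φ (c a) (c b) (fun i => R i a b) (fun i => R i b a)} =
      (∏ q ∈ univ.filter (fun q : Fin n × Fin n => q.1 < q.2), Acnt φ (c q.1) (c q.2)) *
        ∏ a, Dcnt φ (c a) := by
  classical
  let V := Fin k → Bool
  let eR : (Fin k → Fin n → Fin n → Bool) ≃ (Fin n × Fin n → V) :=
    { toFun := fun R q i => R i q.1 q.2
      invFun := fun S i a b => S (a, b) i
      left_inv := fun R => rfl
      right_inv := fun S => rfl }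
  have e1 : {R : Fin k → Fin n → Fin n → Bool //
        ∀ a b, φ (c a) (c b) (fun i => R i a b) (fun i => R i b a)} ≃
      {S : Fin n × Fin n → V // ∀ a b, φ (c a) (c b) (S (a, b)) (S (b, a))} :=
    eR.subtypeEquiv fun R => Iff.rfl
  have e2 : {S : Fin n × Fin n → V // ∀ a b, φ (c a) (c b) (S (a, b)) (S (b, a))} ≃
      {P : ({q : Fin n × Fin n // q.1 < q.2} → V × V) × (Fin n → V) //
        (∀ q : {q : Fin n × Fin n // q.1 < q.2},
            φ (c q.1.1) (c q.1.2) (P.1 q).1 (P.1 q).2 ∧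
              φ (c q.1.2) (c q.1.1) (P.1 q).2 (P.1 q).1) ∧
          (∀ a, φ (c a) (c a) (P.2 a) (P.2 a))} := by
    refine (pairSplit n V).subtypeEquiv fun S => ?_
    constructor
    · intro hS
      exact ⟨fun q => ⟨hS q.1.1 q.1.2, hS q.1.2 q.1.1⟩, fun a => hS a a⟩
    · rintro ⟨h1, h2⟩ a b
      rcases lt_trichotomy a b with h | h | h
      · exact (h1 ⟨(a, b), h⟩).1
      · subst h; exact h2 a
      · exact (h1 ⟨(b, a), h⟩).2
  have e3 := (Equiv.subtypeProdEquivProd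
    (p := fun L : {q : Fin n × Fin n // q.1 < q.2} → V × V => ∀ q,
        φ (c q.1.1) (c q.1.2) (L q).1 (L q).2 ∧ φ (c q.1.2) (c q.1.1) (L q).2 (L q).1)
    (q := fun Dg : Fin n → V => ∀ a, φ (c a) (c a) (Dg a) (Dg a)))
  rw [Fintype.card_congr ((e1.trans e2).trans e3), Fintype.card_prod]
  congr 1
  · rw [Fintype.card_congr (Equiv.subtypePiEquivPi
      (p := fun (q : {q : Fin n × Fin n // q.1 < q.2}) (x : V × V) =>
        φ (c q.1.1) (c q.1.2) x.1 x.2 ∧ φ (c q.1.2) (c q.1.1) x.2 x.1)), Fintype.card_pi]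
    rw [Finset.prod_subtype (p := fun q : Fin n × Fin n => q.1 < q.2) (univ.filter (fun q : Fin n × Fin n => q.1 < q.2))
      (fun q => by simp) (fun q => Acnt φ (c q.1) (c q.2))]
    rfl
  · rw [Fintype.card_congr (Equiv.subtypePiEquivPi
      (p := fun (a : Fin n) (u : V) => φ (c a) (c a) u u)), Fintype.card_pi]
    rfl

end FO2Aux

open Finset FO2Aux in
/-- Full combinatorial identity behind PTIME data complexity of FO²: counting
pairs of a coloring `c : Fin n → Fin C` (the cell of each element) and k binary
relations satisfying a per-pair constraint `φ`, by conditioning on the cell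
sizes ν (multinomial coefficient), with independent factors for cross-cell
pairs, same-cell unordered pairs, and diagonal pairs. -/
theorem fo2_factorization (n C k : ℕ)
    (φ : Fin C → Fin C → (Fin k → Bool) → (Fin k → Bool) → Prop)
    [∀ i j u v, Decidable (φ i j u v)] :
    Fintype.card
      {p : (Fin n → Fin C) × (Fin k → Fin n → Fin n → Bool) //
        ∀ a b : Fin n,
          φ (p.1 a) (p.1 b) (fun i => p.2 i a b) (fun i => p.2 i b a)} =
      ∑ ν ∈ Finset.Nat.antidiagonalTuple C n,
        (n.factorial / ∏ l, (ν l).factorial) *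
        (∏ q ∈ Finset.univ.filter (fun q : Fin C × Fin C => q.1 < q.2),
          (Fintype.card
            {uv : (Fin k → Bool) × (Fin k → Bool) //
              φ q.1 q.2 uv.1 uv.2 ∧ φ q.2 q.1 uv.2 uv.1}) ^ (ν q.1 * ν q.2)) *
        (∏ l,
          (Fintype.card
            {uv : (Fin k → Bool) × (Fin k → Bool) //
              φ l l uv.1 uv.2 ∧ φ l l uv.2 uv.1}) ^ (ν l * (ν l - 1) / 2)) *
        (∏ l, (Fintype.card {u : Fin k → Bool // φ l l u u}) ^ (ν l)) := by
  classical
  rw [Fintype.card_congr (Equiv.subtypeProdEquivSigmaSubtype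
    (fun (c : Fin n → Fin C) (R : Fin k → Fin n → Fin n → Bool) =>
      ∀ a b, φ (c a) (c b) (fun i => R i a b) (fun i => R i b a))),
    Fintype.card_sigma]
  have step : ∀ c : Fin n → Fin C,
      Fintype.card {R : Fin k → Fin n → Fin n → Bool //
          ∀ a b, φ (c a) (c b) (fun i => R i a b) (fun i => R i b a)} =
        (∏ q ∈ univ.filter (fun q : Fin C × Fin C => q.1 < q.2),
            Acnt φ q.1 q.2 ^ ((univ.filter fun a => c a = q.1).card *
              (univ.filter fun a => c a = q.2).card)) *
          (∏ l, Acnt φ l l ^ ((univ.filter fun a => c a = l).card *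
              ((univ.filter fun a => c a = l).card - 1) / 2)) *
          ∏ l, Dcnt φ l ^ (univ.filter fun a => c a = l).card := by
    intro c
    rw [count_R φ n c, regroup_A c (Acnt φ) (Acnt_symm φ), regroup_D c (Dcnt φ)]
  rw [Finset.sum_congr rfl fun c _ => step c]
  rw [← Finset.sum_fiberwise_of_maps_to (t := Finset.Nat.antidiagonalTuple C n)
    (g := fun c : Fin n → Fin C => fun l => (univ.filter fun a => c a = l).card)
    (fun c _ => Finset.Nat.mem_antidiagonalTuple.2 (by
      rw [← Finset.card_eq_sum_card_fiberwise (fun a _ => mem_univ (c a)), card_univ,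
        Fintype.card_fin])) _]
  refine Finset.sum_congr rfl fun ν hν => ?_
  have hsum : ∑ l, ν l = n := Finset.Nat.mem_antidiagonalTuple.1 hν
  have hcard : (univ.filter fun c : Fin n → Fin C =>
      (fun l => (univ.filter fun a => c a = l).card) = ν).card =
      n.factorial / ∏ l, (ν l).factorial := by
    have h1 : (univ.filter fun c : Fin n → Fin C =>
        (fun l => (univ.filter fun a => c a = l).card) = ν) =
        (univ.filter fun c : Fin n → Fin C =>
          ∀ l, (univ.filter fun a => c a = l).card = ν l) :=
      Finset.filter_congr fun c _ => funext_iff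
    rw [h1]
    exact (Nat.div_eq_of_eq_mul_left (Finset.prod_pos fun l _ => Nat.factorial_pos _)
      (card_colorings ν hsum).symm).symm
  calc (∑ c ∈ univ.filter (fun c : Fin n → Fin C =>
        (fun l => (univ.filter fun a => c a = l).card) = ν), _)
      = ∑ c ∈ univ.filter (fun c : Fin n → Fin C =>
          (fun l => (univ.filter fun a => c a = l).card) = ν),
          ((∏ q ∈ univ.filter (fun q : Fin C × Fin C => q.1 < q.2),
            Acnt φ q.1 q.2 ^ (ν q.1 * ν q.2)) *
          (∏ l, Acnt φ l l ^ (ν l * (ν l - 1) / 2)) *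
          ∏ l, Dcnt φ l ^ ν l) := by
        refine Finset.sum_congr rfl fun c hc => ?_
        have hl : ∀ l, (univ.filter fun a => c a = l).card = ν l :=
          fun l => congrFun (mem_filter.1 hc).2 l
        simp only [hl]
    _ = _ := by
        rw [Finset.sum_const, smul_eq_mul, hcard]
        simp only [Acnt, Dcnt]
        ring
end

section
/- The function e(i,j) = 2^i · 3^{4·i·⌈log₃ j⌉} · (6j + 1) is injective on pairs of natural numbers with i ≥ 1 and j ≥ 1, where ⌈log₃ j⌉ denotes the least natural number c with j ≤ 3^c (Nat.clog 3 j); that is, if e(i,j) = e(i',j') with i, i', j, j' ≥ 1, then i = i' and j = j'. -/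
lemma enc_fact2 (i a j : ℕ) : (2 ^ i * 3 ^ a * (6 * j + 1)).factorization 2 = i := by
  have h1 : (3 ^ a * (6 * j + 1)) % 2 = 1 := by
    rw [Nat.mul_mod, Nat.pow_mod]
    norm_num
    omega
  have hne : 3 ^ a * (6 * j + 1) ≠ 0 := by positivity
  rw [mul_assoc, Nat.factorization_mul (by positivity) hne]
  simp [Nat.Prime.factorization_pow, Nat.factorization_eq_zero_of_not_dvd (by omega : ¬ 2 ∣ 3 ^ a * (6 * j + 1)), Nat.factorization_eq_zero_of_not_dvd (by omega : ¬ 2 ∣ 6 * j + 1), Nat.Prime.factorization Nat.prime_two, Nat.Prime.factorization Nat.prime_three, Finsupp.single_apply]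

lemma enc_fact3 (i a j : ℕ) : (2 ^ i * 3 ^ a * (6 * j + 1)).factorization 3 = a := by
  rw [mul_assoc, Nat.factorization_mul (by positivity) (by positivity),
    Nat.factorization_mul (by positivity) (by positivity)]
  have h2 : (2 ^ i : ℕ).factorization 3 = 0 := by
    apply Nat.factorization_eq_zero_of_not_dvd
    intro hd
    have := Nat.Coprime.eq_one_of_dvd ((by decide : Nat.Coprime 3 2).pow_right i) hd
    omega
  have h3 : (6 * j + 1 : ℕ).factorization 3 = 0 := by
    apply Nat.factorization_eq_zero_of_not_dvd
    omega
  simp [h2, h3, Nat.Prime.factorization_pow, Nat.Prime.factorization Nat.prime_two, Nat.Prime.factorization Nat.prime_three, Finsupp.single_apply]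

/-- Injectivity of the encoding function e(i,j) = 2^i · 3^{4i⌈log₃ j⌉} · (6j+1)
on pairs with i, j ≥ 1. -/
theorem encoding_injective (i j i' j' : ℕ) (hi : 1 ≤ i) (hj : 1 ≤ j)
    (hi' : 1 ≤ i') (hj' : 1 ≤ j')
    (h : 2 ^ i * 3 ^ (4 * i * Nat.clog 3 j) * (6 * j + 1) =
         2 ^ i' * 3 ^ (4 * i' * Nat.clog 3 j') * (6 * j' + 1)) :
    i = i' ∧ j = j' := by
  have h2 := congrArg (fun n => n.factorization 2) h
  have h3 := congrArg (fun n => n.factorization 3) h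
  simp only [enc_fact2, enc_fact3] at h2 h3
  subst h2
  rw [h3] at h
  have := Nat.eq_of_mul_eq_mul_left (by positivity :
    0 < 2 ^ i * 3 ^ (4 * i * Nat.clog 3 j')) h
  omega
end

section
/- Let a be a natural number, β a finite type, p a real number, and H : (β → Bool) → ℝ an arbitrary function. Then ∑_{R : Fin a → β → Bool} (∏_{(i,b) with R i b = true} p) · (∏_{(i,b) with R i b = false} (1 − p)) · H (fun b => decide (∃ i, R i b = true)) = ∑_{R' : β → Bool} (∏_{b with R' b = true} (1 − (1 − p)^a)) · (∏_{b with R' b = false} (1 − p)^a) · H R'. -/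
open Finset

private lemma key_group {γ β : Type*} [Fintype γ] [DecidableEq γ] [Fintype β] [DecidableEq β]
    (w : γ → ℝ) (π : γ → Bool) (H : (β → Bool) → ℝ) :
    ∑ S : β → γ, (∏ b, w (S b)) * H (fun b => π (S b)) =
    ∑ R' : β → Bool, (∏ b, ∑ t ∈ univ.filter (fun t => π t = R' b), w t) * H R' := by
  rw [← Finset.sum_fiberwise Finset.univ (fun S : β → γ => (fun b => π (S b)))
    (fun S => (∏ b, w (S b)) * H (fun b => π (S b)))]
  refine Finset.sum_congr rfl fun R' _ => ?_
  rw [Finset.prod_univ_sum, Finset.sum_mul]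
  refine Finset.sum_congr ?_ fun S hS => ?_
  · ext S
    simp [Fintype.mem_piFinset, funext_iff]
  · have : (fun b => π (S b)) = R' := by
      funext b
      have := Fintype.mem_piFinset.1 hS b
      simpa using this
    rw [this]

/-- Rule (a) (elimination of an isolated variable) for γ-acyclic queries: if a
variable with domain of size `a` occurs only in the atom `R`, then `R` may be
replaced by a projected atom `R'` whose tuples have probability 1 − (1 − p)^a. -/
theorem eliminate_isolated_variable (a : ℕ) (β : Type*) [Fintype β]
    [DecidableEq β] (p : ℝ) (H : (β → Bool) → ℝ) :
    ∑ R : Fin a → β → Bool,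
      (∏ q ∈ Finset.univ.filter (fun q : Fin a × β => R q.1 q.2 = true), p) *
      (∏ q ∈ Finset.univ.filter (fun q : Fin a × β => R q.1 q.2 = false), (1 - p)) *
      H (fun b => decide (∃ i, R i b = true)) =
    ∑ R' : β → Bool,
      (∏ b ∈ Finset.univ.filter (fun b => R' b = true), (1 - (1 - p) ^ a)) *
      (∏ b ∈ Finset.univ.filter (fun b => R' b = false), (1 - p) ^ a) *
      H R' := by
  set w : (Fin a → Bool) → ℝ := fun t => ∏ i, (if t i then p else 1 - p) with hw
  set π : (Fin a → Bool) → Bool := fun t => decide (∃ i, t i = true) with hπ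
  -- fiber sums
  have hfalse : ∑ t ∈ univ.filter (fun t => π t = false), w t = (1 - p) ^ a := by
    have : univ.filter (fun t : Fin a → Bool => π t = false) = {fun _ => false} := by
      ext t
      simp [hπ, funext_iff]
    rw [this, Finset.sum_singleton, hw]
    simp
  have htotal : ∑ t : Fin a → Bool, w t = 1 := by
    have h1 : (∏ _i : Fin a, ∑ x : Bool, (if x = true then p else 1 - p))
        = ∑ t ∈ Fintype.piFinset (fun _ : Fin a => (univ : Finset Bool)),
            ∏ i, (if t i = true then p else 1 - p) :=
      Finset.prod_univ_sum _ _
    rw [Fintype.piFinset_univ] at h1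
    simp only [hw]
    rw [← h1]
    have h2 : ∑ x : Bool, (if x = true then p else 1 - p) = 1 := by
      simp [Fintype.sum_bool]
    rw [h2]
    simp
  have htrue : ∑ t ∈ univ.filter (fun t => π t = true), w t = 1 - (1 - p) ^ a := by
    have h := Finset.sum_filter_add_sum_filter_not univ (fun t => π t = true) w
    have h2 : univ.filter (fun t : Fin a → Bool => ¬ π t = true)
        = univ.filter (fun t => π t = false) := by
      ext t; simp
    rw [h2, hfalse, htotal] at h
    linarith
  -- reindex and rewrite weights
  have hswap : ∀ R : Fin a → β → Bool,
      (∏ q ∈ Finset.univ.filter (fun q : Fin a × β => R q.1 q.2 = true), p) *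
      (∏ q ∈ Finset.univ.filter (fun q : Fin a × β => R q.1 q.2 = false), (1 - p))
      = ∏ b, w (fun i => R i b) := by
    intro R
    have h1 : (∏ q ∈ Finset.univ.filter (fun q : Fin a × β => R q.1 q.2 = true), p) *
        (∏ q ∈ Finset.univ.filter (fun q : Fin a × β => R q.1 q.2 = false), (1 - p))
        = ∏ q : Fin a × β, (if R q.1 q.2 then p else 1 - p) := by
      rw [Finset.prod_ite]
      congr 1
      refine Finset.prod_congr ?_ (fun _ _ => rfl)
      ext q
      simp
    rw [h1, hw, Fintype.prod_prod_type' (f := fun (i : Fin a) (b : β) => if R i b = true then p else 1 - p)]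
    exact Finset.prod_comm
  calc ∑ R : Fin a → β → Bool,
      (∏ q ∈ Finset.univ.filter (fun q : Fin a × β => R q.1 q.2 = true), p) *
      (∏ q ∈ Finset.univ.filter (fun q : Fin a × β => R q.1 q.2 = false), (1 - p)) *
      H (fun b => decide (∃ i, R i b = true))
      = ∑ S : β → Fin a → Bool, (∏ b, w (S b)) * H (fun b => π (S b)) := by
        refine Fintype.sum_bijective Function.swap
          ⟨fun f g h => by funext i b; exact congrFun (congrFun h b) i,
           fun S => ⟨Function.swap S, rfl⟩⟩ _ _ fun R => ?_
        rw [hswap R]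
    _ = ∑ R' : β → Bool, (∏ b, ∑ t ∈ univ.filter (fun t => π t = R' b), w t) * H R' :=
        key_group w π H
    _ = _ := by
        refine Finset.sum_congr rfl fun R' _ => ?_
        congr 1
        have hb : ∀ b, (∑ t ∈ univ.filter (fun t => π t = R' b), w t)
            = if R' b then 1 - (1 - p) ^ a else (1 - p) ^ a := by
          intro b
          cases h : R' b <;> simp [h, hfalse, htrue]
        rw [Finset.prod_congr rfl (fun b _ => hb b), Finset.prod_ite]
        congr 1 <;> first
          | rfl
          | (congr 1; ext b; simp)
end
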